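/- arXiv:2603.02334 — 8 statements merged into one kernel-verified Lean document; each statement's English description precedes it below -/
import Mathlib

section
/- For every n ≥ 2, if Ψ_1, …, Ψ_t are t mutually orthogonal quantum Latin squares of order n, then t ≤ n − 1. -/
/-!
Fix two distinct rows `i ≠ k` and a column `l`. In every square `Ψ_s` the unit vector `Ψ_s(k,l)`
is not orthogonal to the whole orthonormal basis formed by row `i`, so `⟨Ψ_s(i,j), Ψ_s(k,l)⟩ ≠ 0`
for some column `j`, and `j ≠ l` because column `l` is orthonormal. Two different squares
cannot both be non-orthogonal on the same pair of cells, so `s ↦ j` is injective from the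
squares into the `n - 1` columns other than `l`.
-/

noncomputable section

/-- A quantum Latin square of order `n`: an `n × n` matrix of vectors in `ℂ^n`
such that every row and every column is an orthonormal family. -/
def IsQLS {n : ℕ} (Ψ : Fin n → Fin n → EuclideanSpace ℂ (Fin n)) : Prop :=
  (∀ i, Orthonormal ℂ (fun j => Ψ i j)) ∧ (∀ j, Orthonormal ℂ (fun i => Ψ i j))

/-- Two quantum Latin squares are orthogonal: for distinct cells `(i,j) ≠ (k,l)`,
`⟨Ψ_{ij}, Ψ_{kl}⟩ · ⟨Φ_{ij}, Φ_{kl}⟩ = 0`; equivalently, the `n²` vectors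
`Ψ_{ij} ⊗ Φ_{ij}` form an orthonormal basis of `ℂ^n ⊗ ℂ^n`. -/
def OrthQLS {n : ℕ} (Ψ Φ : Fin n → Fin n → EuclideanSpace ℂ (Fin n)) : Prop :=
  ∀ i j k l, (i, j) ≠ (k, l) →
    (inner ℂ (Ψ i j) (Ψ k l) : ℂ) * (inner ℂ (Φ i j) (Φ k l) : ℂ) = 0

open Module Submodule

theorem Orthonormal.exists_inner_ne_zero {𝕜 E ι : Type*} [RCLike 𝕜] [NormedAddCommGroup E]
    [InnerProductSpace 𝕜 E] [FiniteDimensional 𝕜 E] [Fintype ι] {v : ι → E}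
    (hv : Orthonormal 𝕜 v) (hcard : Fintype.card ι = finrank 𝕜 E) {w : E} (hw : w ≠ 0) :
    ∃ i, inner 𝕜 (v i) w ≠ 0 := by
  by_contra! h
  have hspan : span 𝕜 (Set.range v) = ⊤ :=
    hv.linearIndependent.span_eq_top_of_card_eq_finrank' hcard
  have hle : span 𝕜 (Set.range v) ≤ (𝕜 ∙ w)ᗮ :=
    span_le.2 <| Set.range_subset_iff.2 fun i => mem_orthogonal_singleton_iff_inner_left.2 (h i)
  rw [hspan, top_le_iff] at hle
  have hww : w ∈ (𝕜 ∙ w)ᗮ := hle ▸ mem_top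
  exact hw (inner_self_eq_zero.1 (mem_orthogonal_singleton_iff_inner_left.1 hww))

theorem IsQLS.exists_ne_inner_ne_zero {n : ℕ} {Ψ : Fin n → Fin n → EuclideanSpace ℂ (Fin n)}
    (hΨ : IsQLS Ψ) {i k : Fin n} (hik : i ≠ k) (l : Fin n) :
    ∃ j, j ≠ l ∧ inner ℂ (Ψ i j) (Ψ k l) ≠ 0 := by
  obtain ⟨j, hj⟩ := (hΨ.1 i).exists_inner_ne_zero (by simp) ((hΨ.2 l).ne_zero k)
  refine ⟨j, ?_, hj⟩
  rintro rfl
  exact hj ((hΨ.2 j).inner_eq_zero hik)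

theorem eq_of_inner_ne_zero_of_orthQLS {n t : ℕ}
    {Ψ : Fin t → Fin n → Fin n → EuclideanSpace ℂ (Fin n)}
    (hO : ∀ s u, s ≠ u → OrthQLS (Ψ s) (Ψ u)) {s u : Fin t} {i j k l : Fin n}
    (hcell : (i, j) ≠ (k, l)) (hs : inner ℂ (Ψ s i j) (Ψ s k l) ≠ 0)
    (hu : inner ℂ (Ψ u i j) (Ψ u k l) ≠ 0) : s = u :=
  by_contra fun hsu => mul_ne_zero hs hu (hO s u hsu i j k l hcell)

/-- There are at most `n - 1` mutually orthogonal quantum Latin squares of order `n`. -/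
theorem MOQLS_card_le (n t : ℕ) (hn : 2 ≤ n)
    (Ψ : Fin t → Fin n → Fin n → EuclideanSpace ℂ (Fin n))
    (hQ : ∀ s, IsQLS (Ψ s))
    (hO : ∀ s u, s ≠ u → OrthQLS (Ψ s) (Ψ u)) :
    t ≤ n - 1 := by
  obtain ⟨i, k, hik⟩ : ∃ i k : Fin n, i ≠ k :=
    ⟨⟨0, by omega⟩, ⟨1, by omega⟩, by simp [Fin.ext_iff]⟩
  choose f hfk hf using fun s => (hQ s).exists_ne_inner_ne_zero hik k
  have hinj : Function.Injective fun s => (⟨f s, hfk s⟩ : {j : Fin n // j ≠ k}) :=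
    fun s u hsu => by
      have hfsu : f s = f u := congrArg Subtype.val hsu
      exact eq_of_inner_ne_zero_of_orthQLS hO (by simp [hik]) (hf s) (hfsu ▸ hf u)
  simpa using Fintype.card_le_of_injective _ hinj
end
end

section
/- For every n ≥ 2, if Ψ_1, …, Ψ_{n−1} are n − 1 mutually orthogonal quantum Latin squares of order n, then they are classical: there exist, for each square Ψ_s, a unitary transformation U_s of ℂ^n and unit scalars λ^{(s)}_{ij} ∈ ℂ such that λ^{(s)}_{ij}·U_s(Ψ_s)_{ij} is a standard basis vector of ℂ^n for every s, i, j. -/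
/-!
Fix two cells `(i, j)`, `(k, l)` with `i ≠ k` and put `a_s(l) = |⟨Ψ_s(i,j), Ψ_s(k,l)⟩|²`.
Parseval along row `k` and column orthogonality give `∑_{l ≠ j} a_s(l) = 1` for every square `s`,
while mutual orthogonality leaves at most one nonzero `a_s(l)` for each `l`, so `∑_s a_s(l) ≤ 1`.
Summing over the `n - 1` columns `l ≠ j` and the `n - 1` squares forces `∑_s a_s(l) = 1`; as this
sum has at most one nonzero term, every `a_s(l)` is `0` or `1`: two entries of a square in
different rows and columns are orthogonal or equal up to a phase. Each entry is therefore a phase times an entry of a fixed row, and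
taking coordinates in the orthonormal basis formed by that row makes the square classical.
-/

noncomputable section

open Finset
open scoped InnerProductSpace

def IsClassicalQLS {n : ℕ} (Ψ : Fin n → Fin n → EuclideanSpace ℂ (Fin n)) : Prop :=
  ∃ (U : EuclideanSpace ℂ (Fin n) ≃ₗᵢ[ℂ] EuclideanSpace ℂ (Fin n)) (lam : Fin n → Fin n → ℂ),
    (∀ i j, ‖lam i j‖ = 1) ∧ ∀ i j, ∃ k, lam i j • U (Ψ i j) = EuclideanSpace.single k (1 : ℂ)

theorem exists_norm_eq_one_smul_eq_of_norm_inner_eq_one {𝕜 E : Type*} [RCLike 𝕜]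
    [NormedAddCommGroup E] [InnerProductSpace 𝕜 E] {x y : E} (hx : ‖x‖ = 1) (hy : ‖y‖ = 1)
    (h : ‖⟪x, y⟫_𝕜‖ = 1) : ∃ c : 𝕜, ‖c‖ = 1 ∧ c • x = y := by
  have hx₀ : x ≠ 0 := norm_ne_zero_iff.1 (by simp [hx])
  have hy₀ : y ≠ 0 := norm_ne_zero_iff.1 (by simp [hy])
  obtain ⟨c, -, rfl⟩ := (norm_inner_eq_norm_iff hx₀ hy₀).1 (by rw [h, hx, hy, one_mul])
  exact ⟨c, by simpa [norm_smul, hx] using hy, rfl⟩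

namespace IsQLS

variable {n : ℕ} {Ψ : Fin n → Fin n → EuclideanSpace ℂ (Fin n)}

theorem norm_eq_one (h : IsQLS Ψ) (i j : Fin n) : ‖Ψ i j‖ = 1 :=
  (h.1 i).1 j

theorem inner_eq_zero_of_ne (h : IsQLS Ψ) {i k : Fin n} (j : Fin n) (hik : i ≠ k) :
    ⟪Ψ i j, Ψ k j⟫_ℂ = 0 :=
  (h.2 j).2 hik

def rowBasis (h : IsQLS Ψ) (i : Fin n) : OrthonormalBasis (Fin n) ℂ (EuclideanSpace ℂ (Fin n)) :=
  OrthonormalBasis.mk (h.1 i) ((h.1 i).linearIndependent.span_eq_top_of_card_eq_finrank'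
    (by simp)).ge

@[simp]
theorem rowBasis_apply (h : IsQLS Ψ) (i l : Fin n) : h.rowBasis i l = Ψ i l := by
  simp [rowBasis]

theorem sum_sq_norm_inner_row (h : IsQLS Ψ) (k : Fin n) (v : EuclideanSpace ℂ (Fin n)) :
    ∑ l, ‖⟪v, Ψ k l⟫_ℂ‖ ^ 2 = ‖v‖ ^ 2 := by
  simpa using (h.rowBasis k).sum_sq_norm_inner_left v

theorem sum_erase_sq_norm_inner (h : IsQLS Ψ) {i k : Fin n} (j : Fin n) (hik : i ≠ k) :
    ∑ l ∈ univ.erase j, ‖⟪Ψ i j, Ψ k l⟫_ℂ‖ ^ 2 = 1 := by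
  have hrow := h.sum_sq_norm_inner_row k (Ψ i j)
  rwa [← sum_erase_add _ _ (mem_univ j), h.inner_eq_zero_of_ne j hik, norm_zero,
    zero_pow two_ne_zero, add_zero, h.norm_eq_one, one_pow] at hrow

theorem exists_smul_eq_of_inner_eq_zero_or_norm_inner_eq_one (h : IsQLS Ψ)
    (hpar : ∀ i j k l, i ≠ k → j ≠ l → ⟪Ψ i j, Ψ k l⟫_ℂ = 0 ∨ ‖⟪Ψ i j, Ψ k l⟫_ℂ‖ = 1)
    (r i j : Fin n) : ∃ (c : ℂ) (m : Fin n), ‖c‖ = 1 ∧ c • Ψ i j = Ψ r m := by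
  rcases eq_or_ne i r with rfl | hir
  · exact ⟨1, j, norm_one, one_smul ℂ _⟩
  have hsum : ∑ m, ‖⟪Ψ i j, Ψ r m⟫_ℂ‖ ^ 2 ≠ 0 := by
    rw [h.sum_sq_norm_inner_row, h.norm_eq_one]
    norm_num
  obtain ⟨m, -, hm⟩ := exists_ne_zero_of_sum_ne_zero hsum
  have hinner : ⟪Ψ i j, Ψ r m⟫_ℂ ≠ 0 := fun h0 => hm (by simp [h0])
  have hjm : j ≠ m := by
    rintro rfl
    exact hinner (h.inner_eq_zero_of_ne j hir)
  obtain ⟨c, hc, hcΨ⟩ := exists_norm_eq_one_smul_eq_of_norm_inner_eq_one (h.norm_eq_one i j)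
    (h.norm_eq_one r m) ((hpar i j r m hir hjm).resolve_left hinner)
  exact ⟨c, m, hc, hcΨ⟩

theorem isClassicalQLS_of_inner_eq_zero_or_norm_inner_eq_one (h : IsQLS Ψ)
    (hpar : ∀ i j k l, i ≠ k → j ≠ l → ⟪Ψ i j, Ψ k l⟫_ℂ = 0 ∨ ‖⟪Ψ i j, Ψ k l⟫_ℂ‖ = 1) :
    IsClassicalQLS Ψ := by
  rcases isEmpty_or_nonempty (Fin n) with _ | ⟨⟨r⟩⟩
  · exact ⟨LinearIsometryEquiv.refl ℂ _, 0, isEmptyElim, isEmptyElim⟩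
  choose lam m hlam hΨ using h.exists_smul_eq_of_inner_eq_zero_or_norm_inner_eq_one hpar r
  refine ⟨(h.rowBasis r).repr, lam, hlam, fun i j => ⟨m i j, ?_⟩⟩
  rw [← LinearIsometryEquiv.map_smul, hΨ, ← h.rowBasis_apply, OrthonormalBasis.repr_self]

end IsQLS

namespace OrthQLS

variable {n : ℕ} {Ψ Φ : Fin n → Fin n → EuclideanSpace ℂ (Fin n)}

theorem inner_eq_zero_of_inner_ne_zero (h : OrthQLS Ψ Φ) {i j k l : Fin n}
    (hcell : (i, j) ≠ (k, l)) (hΨ : ⟪Ψ i j, Ψ k l⟫_ℂ ≠ 0) : ⟪Φ i j, Φ k l⟫_ℂ = 0 :=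
  (mul_eq_zero.1 (h i j k l hcell)).resolve_left hΨ

end OrthQLS

section Mutual

variable {ι : Type*} [Fintype ι] {n : ℕ} {Ψ : ι → Fin n → Fin n → EuclideanSpace ℂ (Fin n)}

theorem sum_sq_norm_inner_eq_of_ne_zero (hO : Pairwise fun s u => OrthQLS (Ψ s) (Ψ u))
    {i j k l : Fin n} (hcell : (i, j) ≠ (k, l)) {s : ι} (hs : ⟪Ψ s i j, Ψ s k l⟫_ℂ ≠ 0) :
    ∑ u, ‖⟪Ψ u i j, Ψ u k l⟫_ℂ‖ ^ 2 = ‖⟪Ψ s i j, Ψ s k l⟫_ℂ‖ ^ 2 := by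
  refine sum_eq_single_of_mem s (mem_univ s) fun u _ hus => ?_
  rw [(hO hus.symm).inner_eq_zero_of_inner_ne_zero hcell hs, norm_zero, zero_pow two_ne_zero]

theorem sum_sq_norm_inner_le_one (hQ : ∀ s, IsQLS (Ψ s))
    (hO : Pairwise fun s u => OrthQLS (Ψ s) (Ψ u)) {i j k l : Fin n} (hcell : (i, j) ≠ (k, l)) :
    ∑ u, ‖⟪Ψ u i j, Ψ u k l⟫_ℂ‖ ^ 2 ≤ 1 := by
  by_cases hex : ∃ s, ⟪Ψ s i j, Ψ s k l⟫_ℂ ≠ 0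
  · obtain ⟨s, hs⟩ := hex
    rw [sum_sq_norm_inner_eq_of_ne_zero hO hcell hs]
    have hcs := norm_inner_le_norm (𝕜 := ℂ) (Ψ s i j) (Ψ s k l)
    rw [(hQ s).norm_eq_one, (hQ s).norm_eq_one, mul_one] at hcs
    exact pow_le_one₀ (norm_nonneg _) hcs
  · push Not at hex
    simp [hex]

theorem sum_sq_norm_inner_eq_one (hcard : Fintype.card ι = n - 1) (hQ : ∀ s, IsQLS (Ψ s))
    (hO : Pairwise fun s u => OrthQLS (Ψ s) (Ψ u)) {i j k l : Fin n} (hik : i ≠ k) (hjl : j ≠ l) :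
    ∑ s, ‖⟪Ψ s i j, Ψ s k l⟫_ℂ‖ ^ 2 = 1 := by
  have hle : ∀ l' ∈ univ.erase j, ∑ s, ‖⟪Ψ s i j, Ψ s k l'⟫_ℂ‖ ^ 2 ≤ 1 :=
    fun l' _ => sum_sq_norm_inner_le_one hQ hO (by simp [hik])
  have htotal : ∑ l' ∈ univ.erase j, ∑ s, ‖⟪Ψ s i j, Ψ s k l'⟫_ℂ‖ ^ 2
      = ∑ l' ∈ univ.erase j, (1 : ℝ) := by
    rw [sum_comm]
    simp [(hQ _).sum_erase_sq_norm_inner j hik, hcard]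
  exact (sum_eq_sum_iff_of_le hle).1 htotal l (mem_erase.2 ⟨hjl.symm, mem_univ l⟩)

theorem inner_eq_zero_or_norm_inner_eq_one (hcard : Fintype.card ι = n - 1)
    (hQ : ∀ s, IsQLS (Ψ s)) (hO : Pairwise fun s u => OrthQLS (Ψ s) (Ψ u)) (s : ι)
    {i j k l : Fin n} (hik : i ≠ k) (hjl : j ≠ l) :
    ⟪Ψ s i j, Ψ s k l⟫_ℂ = 0 ∨ ‖⟪Ψ s i j, Ψ s k l⟫_ℂ‖ = 1 := by
  refine or_iff_not_imp_left.2 fun hs => ?_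
  have hsum := sum_sq_norm_inner_eq_one hcard hQ hO hik hjl
  rw [sum_sq_norm_inner_eq_of_ne_zero hO (by simp [hik]) hs] at hsum
  exact (pow_eq_one_iff_of_nonneg (norm_nonneg _) two_ne_zero).1 hsum

end Mutual

theorem MOQLS_max_classical_general (n : ℕ)
    (Ψ : Fin (n - 1) → Fin n → Fin n → EuclideanSpace ℂ (Fin n))
    (hQ : ∀ s, IsQLS (Ψ s))
    (hO : ∀ s u, s ≠ u → OrthQLS (Ψ s) (Ψ u)) :
    ∃ (U : Fin (n - 1) → (EuclideanSpace ℂ (Fin n) ≃ₗᵢ[ℂ] EuclideanSpace ℂ (Fin n)))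
      (lam : Fin (n - 1) → Fin n → Fin n → ℂ),
      (∀ s i j, ‖lam s i j‖ = 1) ∧
      (∀ s i j, ∃ k, lam s i j • (U s) (Ψ s i j) = EuclideanSpace.single k (1 : ℂ)) := by
  have hclassical : ∀ s, IsClassicalQLS (Ψ s) := fun s =>
    (hQ s).isClassicalQLS_of_inner_eq_zero_or_norm_inner_eq_one fun _ _ _ _ hik hjl =>
      inner_eq_zero_or_norm_inner_eq_one (Fintype.card_fin _) hQ (fun s u => hO s u) s hik hjl
  choose U lam hlam hU using hclassical
  exact ⟨U, lam, hlam, hU⟩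

/-- `n - 1` mutually orthogonal quantum Latin squares of order `n` are classical:
for each square there is a unitary of `ℂ^n` and unit scalars turning every entry
into a standard basis vector. -/
theorem MOQLS_max_classical (n : ℕ) (hn : 2 ≤ n)
    (Ψ : Fin (n - 1) → Fin n → Fin n → EuclideanSpace ℂ (Fin n))
    (hQ : ∀ s, IsQLS (Ψ s))
    (hO : ∀ s u, s ≠ u → OrthQLS (Ψ s) (Ψ u)) :
    ∃ (U : Fin (n - 1) → (EuclideanSpace ℂ (Fin n) ≃ₗᵢ[ℂ] EuclideanSpace ℂ (Fin n)))
      (lam : Fin (n - 1) → Fin n → Fin n → ℂ),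
      (∀ s i j, ‖lam s i j‖ = 1) ∧
      (∀ s i j, ∃ k, lam s i j • (U s) (Ψ s i j) = EuclideanSpace.single k (1 : ℂ)) :=
  MOQLS_max_classical_general n Ψ hQ hO
end
end

section
/- Every pair of orthogonal quantum Latin squares of order 4 is classical: if Ψ and Φ are orthogonal quantum Latin squares of order 4, then there exist unitary transformations U, V of ℂ^4 and unit scalars λ_{ij}, μ_{ij} ∈ ℂ such that every λ_{ij}·U(Ψ_{ij}) and every μ_{ij}·V(Φ_{ij}) is a standard basis vector of ℂ^4. -/
/-!
Rotate each square so that its first row is the standard basis. Column orthonormality then puts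
every other entry of column `j` into `e_jᗮ`, and orthogonality of the two squares against the first
row makes `Ψ_{aj}` and `Φ_{aj}` disjointly supported. Two orthogonal vectors never have supports
meeting in exactly one coordinate. So if `Ψ_{aj}` had two nonzero coordinates `p, q`, the unit
vector `Φ_{aj}` would sit on the fourth coordinate `m`; this pushes the other two entries `Ψ_{bj}`,
`Ψ_{cj}` of the column onto `m` as well, although they are orthogonal.
-/

noncomputable section

open scoped InnerProductSpace

namespace EuclideanSpace

variable {ι : Type*} [Fintype ι]

theorem exists_apply_ne_zero {v : EuclideanSpace ℂ ι} (hv : v ≠ 0) : ∃ i, v i ≠ 0 := by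
  by_contra! h
  exact hv (PiLp.ext h)

theorem apply_ne_zero_of_forall_ne_apply_eq_zero {v : EuclideanSpace ℂ ι} (hv : v ≠ 0) {k : ι}
    (hk : ∀ i ≠ k, v i = 0) : v k ≠ 0 := by
  obtain ⟨i, hi⟩ := exists_apply_ne_zero hv
  obtain rfl : i = k := not_not.mp (mt (hk i) hi)
  exact hi

theorem apply_eq_zero_or_apply_eq_zero_of_inner_eq_zero {u v : EuclideanSpace ℂ ι}
    (huv : ⟪u, v⟫_ℂ = 0) {k : ι} (hk : ∀ i ≠ k, u i = 0 ∨ v i = 0) : u k = 0 ∨ v k = 0 := by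
  rw [PiLp.inner_apply, Finset.sum_eq_single k
    (fun i _ hi => by rcases hk i hi with h | h <;> simp [h]) (by simp)] at huv
  simpa [or_comm] using huv

theorem exists_norm_eq_one_smul_eq_single [DecidableEq ι] {v : EuclideanSpace ℂ ι}
    (hv : ‖v‖ = 1) (hsupp : ∀ i j, v i ≠ 0 → v j ≠ 0 → i = j) :
    ∃ c : ℂ, ‖c‖ = 1 ∧ ∃ k, c • v = single k 1 := by
  obtain ⟨k, hk⟩ := exists_apply_ne_zero (norm_ne_zero_iff.mp (hv.symm ▸ one_ne_zero))
  have hv_eq : v = single k (v k) := by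
    ext i
    by_cases hi : i = k
    · simp [hi]
    · rw [PiLp.single_apply, if_neg hi]
      by_contra h
      exact hi (hsupp i k h hk)
  have hvk : ‖v k‖ = 1 := by rwa [hv_eq, PiLp.norm_single] at hv
  refine ⟨(v k)⁻¹, by rw [norm_inv, hvk, inv_one], k, ?_⟩
  rw [hv_eq]
  ext i
  by_cases hi : i = k <;> simp [hi, hk]

end EuclideanSpace

section QLS

variable {n : ℕ} {Ψ Φ : Fin n → Fin n → EuclideanSpace ℂ (Fin n)}

theorem IsQLS.map (hΨ : IsQLS Ψ)
    (U : EuclideanSpace ℂ (Fin n) ≃ₗᵢ[ℂ] EuclideanSpace ℂ (Fin n)) :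
    IsQLS fun i j => U (Ψ i j) :=
  ⟨fun i => (hΨ.1 i).comp_linearIsometryEquiv U, fun j => (hΨ.2 j).comp_linearIsometryEquiv U⟩

theorem OrthQLS.map (hO : OrthQLS Ψ Φ)
    (U V : EuclideanSpace ℂ (Fin n) ≃ₗᵢ[ℂ] EuclideanSpace ℂ (Fin n)) :
    OrthQLS (fun i j => U (Ψ i j)) (fun i j => V (Φ i j)) := by
  intro i j k l h
  simpa only [LinearIsometryEquiv.inner_map_map] using hO i j k l h

theorem OrthQLS.symm (hO : OrthQLS Ψ Φ) : OrthQLS Φ Ψ :=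
  fun i j k l h => (mul_comm _ _).trans (hO i j k l h)

theorem IsQLS.exists_linearIsometryEquiv_row_eq_single (hΨ : IsQLS Ψ) (i₀ : Fin n) :
    ∃ U : EuclideanSpace ℂ (Fin n) ≃ₗᵢ[ℂ] EuclideanSpace ℂ (Fin n),
      ∀ j, U (Ψ i₀ j) = EuclideanSpace.single j 1 := by
  have : Nonempty (Fin n) := ⟨i₀⟩
  let b := (basisOfOrthonormalOfCardEqFinrank (hΨ.1 i₀) (by simp)).toOrthonormalBasis
    (by simpa using hΨ.1 i₀)
  refine ⟨b.repr, fun j => ?_⟩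
  have hb : b j = Ψ i₀ j := by simp [b]
  rw [← hb, b.repr_self]

structure IsNormalizedOrthQLS (Ψ Φ : Fin n → Fin n → EuclideanSpace ℂ (Fin n)) (i₀ : Fin n) :
    Prop where
  isQLS_left : IsQLS Ψ
  isQLS_right : IsQLS Φ
  orthQLS : OrthQLS Ψ Φ
  row_left : ∀ j, Ψ i₀ j = EuclideanSpace.single j 1
  row_right : ∀ j, Φ i₀ j = EuclideanSpace.single j 1

namespace IsNormalizedOrthQLS

variable {i₀ : Fin n}

theorem symm (h : IsNormalizedOrthQLS Ψ Φ i₀) : IsNormalizedOrthQLS Φ Ψ i₀ :=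
  ⟨h.isQLS_right, h.isQLS_left, h.orthQLS.symm, h.row_right, h.row_left⟩

theorem apply_self_eq_zero (h : IsNormalizedOrthQLS Ψ Φ i₀) {a : Fin n} (ha : a ≠ i₀) (j : Fin n) :
    Ψ a j j = 0 := by
  have : ⟪Ψ i₀ j, Ψ a j⟫_ℂ = 0 := (h.isQLS_left.2 j).2 ha.symm
  rwa [h.row_left, EuclideanSpace.inner_single_left, map_one, one_mul] at this

theorem apply_eq_zero_or_apply_eq_zero (h : IsNormalizedOrthQLS Ψ Φ i₀) {a : Fin n}
    (ha : a ≠ i₀) (j r : Fin n) : Ψ a j r = 0 ∨ Φ a j r = 0 := by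
  have := h.orthQLS i₀ r a j (fun h => ha (congrArg Prod.fst h).symm)
  simpa [h.row_left, h.row_right, EuclideanSpace.inner_single_left] using this

end IsNormalizedOrthQLS

end QLS

theorem Fin.eq_or_eq_or_eq_or_eq_of_ne :
    ∀ {j p q m : Fin 4}, j ≠ p → j ≠ q → j ≠ m → p ≠ q → p ≠ m → q ≠ m →
      ∀ s, s = j ∨ s = p ∨ s = q ∨ s = m := by
  decide

theorem Fin.exists_pair_ne_avoiding :
    ∀ i a : Fin 4, ∃ b c, b ≠ i ∧ a ≠ b ∧ c ≠ i ∧ a ≠ c ∧ b ≠ c := by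
  decide

namespace IsNormalizedOrthQLS

open EuclideanSpace

variable {Ψ Φ : Fin 4 → Fin 4 → EuclideanSpace ℂ (Fin 4)} {i₀ : Fin 4}

/-- `Ψ b j` vanishes at `p` by disjointness from `Φ b j`, hence also at `q`: otherwise its support
would meet that of `Ψ a j` exactly in `q`. -/
theorem apply_eq_zero_of_right_apply_ne_zero (h : IsNormalizedOrthQLS Ψ Φ i₀)
    {a b j p q m : Fin 4} (hcover : ∀ s, s = j ∨ s = p ∨ s = q ∨ s = m) (ha : a ≠ i₀)
    (hb : b ≠ i₀) (hab : a ≠ b) (hq : Ψ a j q ≠ 0) (hm : Ψ a j m = 0) (hp : Φ b j p ≠ 0) :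
    ∀ s ≠ m, Ψ b j s = 0 := by
  have hbp : Ψ b j p = 0 := (h.apply_eq_zero_or_apply_eq_zero hb j p).resolve_right hp
  have hbq : Ψ b j q = 0 := by
    refine (apply_eq_zero_or_apply_eq_zero_of_inner_eq_zero ((h.isQLS_left.2 j).2 hab)
      fun s hs => ?_).resolve_left hq
    rcases hcover s with rfl | rfl | rfl | rfl
    · exact .inl (h.apply_self_eq_zero ha s)
    · exact .inr hbp
    · exact absurd rfl hs
    · exact .inl hm
  intro s hs
  rcases hcover s with rfl | rfl | rfl | rfl
  · exact h.apply_self_eq_zero hb s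
  · exact hbp
  · exact hbq
  · exact absurd rfl hs

/-- Once `Φ a j` is confined to the coordinate `m`, every other `Φ b j` (`b ≠ i₀`) vanishes at `m`
and so meets `{p, q}`, which pushes `Ψ b j` onto `m`. -/
theorem apply_eq_zero_of_two_apply_ne_zero (h : IsNormalizedOrthQLS Ψ Φ i₀)
    {a b j p q m : Fin 4} (hcover : ∀ s, s = j ∨ s = p ∨ s = q ∨ s = m) (ha : a ≠ i₀)
    (hb : b ≠ i₀) (hab : a ≠ b) (hp : Ψ a j p ≠ 0) (hq : Ψ a j q ≠ 0) (hΨm : Ψ a j m = 0)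
    (hΦa : ∀ s ≠ m, Φ a j s = 0) :
    ∀ s ≠ m, Ψ b j s = 0 := by
  have hΦam : Φ a j m ≠ 0 :=
    apply_ne_zero_of_forall_ne_apply_eq_zero ((h.isQLS_right.2 j).ne_zero a) hΦa
  have hΦbm : Φ b j m = 0 :=
    (apply_eq_zero_or_apply_eq_zero_of_inner_eq_zero ((h.isQLS_right.2 j).2 hab)
      fun s hs => .inl (hΦa s hs)).resolve_left hΦam
  obtain ⟨t, ht⟩ := exists_apply_ne_zero ((h.isQLS_right.2 j).ne_zero b)
  rcases hcover t with rfl | rfl | rfl | rfl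
  · exact absurd (h.symm.apply_self_eq_zero hb t) ht
  · exact h.apply_eq_zero_of_right_apply_ne_zero hcover ha hb hab hq hΨm ht
  · exact h.apply_eq_zero_of_right_apply_ne_zero (fun s => by have := hcover s; tauto)
      ha hb hab hp hΨm ht
  · exact absurd hΦbm ht

theorem eq_of_apply_ne_zero (h : IsNormalizedOrthQLS Ψ Φ i₀) {a j p q : Fin 4}
    (hp : Ψ a j p ≠ 0) (hq : Ψ a j q ≠ 0) : p = q := by
  by_cases ha : a = i₀
  · subst ha
    simp only [h.row_left, PiLp.single_apply, ne_eq, ite_eq_right_iff, one_ne_zero,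
      imp_false, not_not] at hp hq
    exact hp.trans hq.symm
  by_contra hpq
  obtain ⟨m, hm⟩ := exists_apply_ne_zero ((h.isQLS_right.2 j).ne_zero a)
  have hdisj := h.apply_eq_zero_or_apply_eq_zero ha j
  have hΨj := h.apply_self_eq_zero ha j
  have hΦj := h.symm.apply_self_eq_zero ha j
  have hΦp : Φ a j p = 0 := (hdisj p).resolve_left hp
  have hΦq : Φ a j q = 0 := (hdisj q).resolve_left hq
  have hcover : ∀ s, s = j ∨ s = p ∨ s = q ∨ s = m :=
    Fin.eq_or_eq_or_eq_or_eq_of_ne (by rintro rfl; exact hp hΨj) (by rintro rfl; exact hq hΨj)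
      (by rintro rfl; exact hm hΦj) hpq (by rintro rfl; exact hm hΦp)
      (by rintro rfl; exact hm hΦq)
  have hΦa : ∀ s ≠ m, Φ a j s = 0 := by
    intro s hs
    rcases hcover s with rfl | rfl | rfl | rfl
    · exact hΦj
    · exact hΦp
    · exact hΦq
    · exact absurd rfl hs
  have hrow (b : Fin 4) (hb : b ≠ i₀) (hab : a ≠ b) : ∀ s ≠ m, Ψ b j s = 0 :=
    h.apply_eq_zero_of_two_apply_ne_zero hcover ha hb hab hp hq ((hdisj m).resolve_right hm) hΦa
  obtain ⟨b, c, hb, hab, hc, hac, hbc⟩ := Fin.exists_pair_ne_avoiding i₀ a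
  have hbm := apply_ne_zero_of_forall_ne_apply_eq_zero ((h.isQLS_left.2 j).ne_zero b)
    (hrow b hb hab)
  have hcm := apply_ne_zero_of_forall_ne_apply_eq_zero ((h.isQLS_left.2 j).ne_zero c)
    (hrow c hc hac)
  exact not_or_intro hbm hcm (apply_eq_zero_or_apply_eq_zero_of_inner_eq_zero
    ((h.isQLS_left.2 j).2 hbc) fun s hs => .inl (hrow b hb hab s hs))

theorem exists_smul_eq_single (h : IsNormalizedOrthQLS Ψ Φ i₀) (a j : Fin 4) :
    ∃ c : ℂ, ‖c‖ = 1 ∧ ∃ k, c • Ψ a j = single k 1 :=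
  exists_norm_eq_one_smul_eq_single ((h.isQLS_left.2 j).1 a) fun _ _ => h.eq_of_apply_ne_zero

end IsNormalizedOrthQLS

/-- Every pair of orthogonal quantum Latin squares of order 4 is classical. -/
theorem two_MOQLS_4_classical
    (Ψ Φ : Fin 4 → Fin 4 → EuclideanSpace ℂ (Fin 4))
    (hΨ : IsQLS Ψ) (hΦ : IsQLS Φ) (hO : OrthQLS Ψ Φ) :
    ∃ (U V : EuclideanSpace ℂ (Fin 4) ≃ₗᵢ[ℂ] EuclideanSpace ℂ (Fin 4))
      (lam mu : Fin 4 → Fin 4 → ℂ),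
      (∀ i j, ‖lam i j‖ = 1) ∧ (∀ i j, ‖mu i j‖ = 1) ∧
      (∀ i j, ∃ k, lam i j • U (Ψ i j) = EuclideanSpace.single k (1 : ℂ)) ∧
      (∀ i j, ∃ k, mu i j • V (Φ i j) = EuclideanSpace.single k (1 : ℂ)) := by
  obtain ⟨U, hU⟩ := hΨ.exists_linearIsometryEquiv_row_eq_single 0
  obtain ⟨V, hV⟩ := hΦ.exists_linearIsometryEquiv_row_eq_single 0
  have h : IsNormalizedOrthQLS (fun i j => U (Ψ i j)) (fun i j => V (Φ i j)) 0 :=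
    ⟨hΨ.map U, hΦ.map V, hO.map U V, hU, hV⟩
  choose lam hlam hΨk using h.exists_smul_eq_single
  choose mu hmu hΦk using h.symm.exists_smul_eq_single
  exact ⟨U, V, lam, mu, hlam, hmu, hΨk, hΦk⟩
end
end

section
/- Let Ψ be a quantum Latin square of order n all of whose entries have weight at most 2 (no entry has three or more nonzero coordinates). Then there exists a quantum Latin square Ψ' of order n whose every entry is a standard basis vector of ℂ^n (i.e., a classical Latin square) such that for every quantum Latin square Φ of order n: if Ψ and Φ are orthogonal, then Ψ' and Φ are orthogonal as well. -/
noncomputable section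

/-- The weight of a vector in `ℂ^n`: the number of nonzero coordinates. -/
def weight {n : ℕ} (v : EuclideanSpace ℂ (Fin n)) : ℕ :=
  (Finset.univ.filter fun k => v k ≠ 0).card

/-!
Send each entry `v` of `Ψ` to one coordinate `σ v` of its support and put the basis vector
`e (σ v)` in that cell of `Ψ'`. It suffices that `σ v = σ w` forces `⟪v, w⟫ ≠ 0`: then every row
and column of `Ψ'` is a permutation of the standard basis, and two cells of `Ψ'` fail to be
orthogonal only where the corresponding cells of `Ψ` do, so orthogonality to `Φ` transfers.
Two orthogonal vectors of weight at most 2 sharing a support coordinate share their whole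
support `{a, b}`, and `(v a, v b) ⟂ (w a, w b)` makes `conj (w a) * w b` a negative real multiple
of `conj (v a) * v b`. So the rule "pick `a` iff `0 < arg (conj (v a) * v b)`" separates them.
-/

open Complex Finset ComplexConjugate

theorem Complex.arg_pos_iff {z : ℂ} : 0 < arg z ↔ 0 < z.im ∨ z.im = 0 ∧ z.re < 0 := by
  rw [lt_iff_le_and_ne, ne_comm, Ne, arg_nonneg_iff, arg_eq_zero_iff]
  grind

theorem Complex.arg_neg_pos_iff {z : ℂ} (hz : z ≠ 0) : 0 < arg (-z) ↔ ¬ 0 < arg z := by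
  rw [Ne, Complex.ext_iff] at hz
  simp only [arg_pos_iff, neg_im, neg_re, zero_re, zero_im] at hz ⊢
  grind

theorem norm_sq_mul_conj_mul_of_conj_mul_add_eq_zero {a b c d : ℂ}
    (h : conj a * c + conj b * d = 0) :
    ((‖a‖ ^ 2 : ℝ) : ℂ) * (conj c * d) = -((‖d‖ ^ 2 : ℝ) : ℂ) * (conj a * b) := by
  have hconj : a * conj c + b * conj d = 0 := by simpa using congrArg conj h
  push_cast
  rw [← mul_conj', ← mul_conj']
  linear_combination (conj a * d) * hconj

theorem arg_conj_mul_pos_iff_of_conj_mul_add_eq_zero {a b c d : ℂ} (ha : a ≠ 0) (hb : b ≠ 0)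
    (hd : d ≠ 0) (h : conj a * c + conj b * d = 0) :
    0 < arg (conj c * d) ↔ ¬ 0 < arg (conj a * b) := by
  rw [← arg_real_mul _ (by positivity : 0 < ‖a‖ ^ 2),
    norm_sq_mul_conj_mul_of_conj_mul_add_eq_zero h, neg_mul,
    arg_neg_pos_iff (by simp [ha, hb, hd]), arg_real_mul _ (by positivity)]

lemma Orthonormal.injective_of_inner_ne_zero {ι α 𝕜 E : Type*} [RCLike 𝕜] [NormedAddCommGroup E]
    [InnerProductSpace 𝕜 E] {v : ι → E} (hv : Orthonormal 𝕜 v) {f : ι → α}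
    (hf : ∀ i j, f i = f j → inner 𝕜 (v i) (v j) ≠ 0) : Function.Injective f := fun i j hij =>
  not_not.1 fun hne => hf i j hij (hv.2 hne)

variable {n : ℕ}

def coordSupport (v : EuclideanSpace ℂ (Fin n)) : Finset (Fin n) :=
  univ.filter fun k => v k ≠ 0

@[simp]
lemma mem_coordSupport {v : EuclideanSpace ℂ (Fin n)} {k : Fin n} :
    k ∈ coordSupport v ↔ v k ≠ 0 := by
  simp [coordSupport]

lemma coordSupport_nonempty {v : EuclideanSpace ℂ (Fin n)} (hv : v ≠ 0) :
    (coordSupport v).Nonempty := by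
  contrapose! hv
  ext k
  simpa using eq_empty_iff_forall_notMem.1 hv k

lemma coordSupport_eq_pair {v : EuclideanSpace ℂ (Fin n)} (hv : weight v ≤ 2) {a b : Fin n}
    (ha : a ∈ coordSupport v) (hb : b ∈ coordSupport v) (hab : a ≠ b) :
    coordSupport v = {a, b} :=
  (eq_of_subset_of_card_le (insert_subset ha (singleton_subset_iff.2 hb))
    (by rw [card_pair hab]; exact hv)).symm

lemma inner_eq_sum_of_conj_mul_eq_zero {v w : EuclideanSpace ℂ (Fin n)} {s : Finset (Fin n)}
    (h : ∀ k ∉ s, conj (v k) * w k = 0) : inner ℂ v w = ∑ k ∈ s, conj (v k) * w k := by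
  rw [sum_subset (subset_univ s) fun k _ hk => h k hk]
  simp [PiLp.inner_apply, mul_comm]

def preferredCoord (v : EuclideanSpace ℂ (Fin n)) (hv : (coordSupport v).Nonempty) : Fin n :=
  if 0 < arg (conj (v ((coordSupport v).min' hv)) * v ((coordSupport v).max' hv)) then
    (coordSupport v).min' hv
  else (coordSupport v).max' hv

lemma preferredCoord_mem (v : EuclideanSpace ℂ (Fin n)) (hv : (coordSupport v).Nonempty) :
    preferredCoord v hv ∈ coordSupport v := by
  unfold preferredCoord
  split_ifs
  exacts [min'_mem _ hv, max'_mem _ hv]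

lemma preferredCoord_of_coordSupport_eq_pair {v : EuclideanSpace ℂ (Fin n)}
    (hv : (coordSupport v).Nonempty) {a b : Fin n} (hab : a < b) (h : coordSupport v = {a, b}) :
    preferredCoord v hv = if 0 < arg (conj (v a) * v b) then a else b := by
  simp [preferredCoord, h, hab.le]

lemma preferredCoord_ne_of_inner_eq_zero {v w : EuclideanSpace ℂ (Fin n)}
    (hv : (coordSupport v).Nonempty) (hw : (coordSupport w).Nonempty) {a b : Fin n} (hab : a < b)
    (hsv : coordSupport v = {a, b}) (hsw : coordSupport w = {a, b}) (h : inner ℂ v w = 0) :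
    preferredCoord v hv ≠ preferredCoord w hw := by
  have hv0 : ∀ k, v k ≠ 0 ↔ k = a ∨ k = b := by simp [← mem_coordSupport, hsv]
  have hw0 : ∀ k, w k ≠ 0 ↔ k = a ∨ k = b := by simp [← mem_coordSupport, hsw]
  have horth : conj (v a) * w a + conj (v b) * w b = 0 := by
    rw [← h, inner_eq_sum_of_conj_mul_eq_zero (s := {a, b}), sum_pair hab.ne]
    intro k hk
    rw [← hsv, mem_coordSupport, not_not] at hk
    rw [hk, map_zero, zero_mul]
  have harg := arg_conj_mul_pos_iff_of_conj_mul_add_eq_zero ((hv0 a).2 (.inl rfl))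
    ((hv0 b).2 (.inr rfl)) ((hw0 b).2 (.inr rfl)) horth
  rw [preferredCoord_of_coordSupport_eq_pair hv hab hsv,
    preferredCoord_of_coordSupport_eq_pair hw hab hsw]
  simp only [harg]
  split_ifs <;> simp_all [hab.ne, hab.ne']

theorem inner_ne_zero_of_preferredCoord_eq {v w : EuclideanSpace ℂ (Fin n)}
    (hv : (coordSupport v).Nonempty) (hw : (coordSupport w).Nonempty)
    (hv2 : weight v ≤ 2) (hw2 : weight w ≤ 2) (h : preferredCoord v hv = preferredCoord w hw) :
    inner ℂ v w ≠ 0 := by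
  set p := preferredCoord v hv
  have hpv : p ∈ coordSupport v := preferredCoord_mem v hv
  have hpw : p ∈ coordSupport w := h ▸ preferredCoord_mem w hw
  by_cases hcommon : ∃ d ≠ p, d ∈ coordSupport v ∧ d ∈ coordSupport w
  · obtain ⟨d, hdp, hdv, hdw⟩ := hcommon
    obtain ⟨a, b, hab, hpd⟩ : ∃ a b, a < b ∧ ({p, d} : Finset (Fin n)) = {a, b} := by
      rcases lt_or_gt_of_ne hdp with hlt | hlt
      exacts [⟨d, p, hlt, pair_comm _ _⟩, ⟨p, d, hlt, rfl⟩]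
    have hsv := coordSupport_eq_pair hv2 hpv hdv hdp.symm
    have hsw := coordSupport_eq_pair hw2 hpw hdw hdp.symm
    rw [hpd] at hsv hsw
    exact fun h0 => preferredCoord_ne_of_inner_eq_zero hv hw hab hsv hsw h0 h
  · push Not at hcommon
    rw [inner_eq_sum_of_conj_mul_eq_zero (s := {p}), sum_singleton]
    · simpa using ⟨mem_coordSupport.1 hpv, mem_coordSupport.1 hpw⟩
    · intro k hk
      by_cases hvk : v k = 0
      · simp [hvk]
      · simpa [hvk] using hcommon k (by simpa using hk) (mem_coordSupport.2 hvk)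

/-- If a quantum Latin square `Ψ` has all entries of weight at most 2, then there is a
classical Latin square `Ψ'` (all entries standard basis vectors) that is orthogonal to
every quantum Latin square that `Ψ` is orthogonal to. -/
theorem weight_le_two_classical_mate (n : ℕ)
    (Ψ : Fin n → Fin n → EuclideanSpace ℂ (Fin n))
    (hΨ : IsQLS Ψ) (hw : ∀ i j, weight (Ψ i j) ≤ 2) :
    ∃ Ψ' : Fin n → Fin n → EuclideanSpace ℂ (Fin n),
      IsQLS Ψ' ∧
      (∀ i j, ∃ k, Ψ' i j = EuclideanSpace.single k (1 : ℂ)) ∧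
      (∀ Φ : Fin n → Fin n → EuclideanSpace ℂ (Fin n),
        IsQLS Φ → OrthQLS Ψ Φ → OrthQLS Ψ' Φ) := by
  have hne i j : (coordSupport (Ψ i j)).Nonempty := coordSupport_nonempty ((hΨ.1 i).ne_zero j)
  let σ i j := preferredCoord (Ψ i j) (hne i j)
  have hσ i j k l : σ i j = σ k l → inner ℂ (Ψ i j) (Ψ k l) ≠ 0 :=
    inner_ne_zero_of_preferredCoord_eq _ _ (hw i j) (hw k l)
  have hsingle := EuclideanSpace.orthonormal_single (𝕜 := ℂ) (ι := Fin n)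
  refine ⟨fun i j => EuclideanSpace.single (σ i j) 1, ⟨fun i => ?_, fun j => ?_⟩,
    fun i j => ⟨_, rfl⟩, fun Φ _ hΨΦ i j k l hijkl => ?_⟩
  · exact hsingle.comp _ ((hΨ.1 i).injective_of_inner_ne_zero fun j l => hσ i j i l)
  · exact hsingle.comp _ ((hΨ.2 j).injective_of_inner_ne_zero fun i k => hσ i j k j)
  · by_cases h : σ i j = σ k l
    · rw [(mul_eq_zero.1 (hΨΦ i j k l hijkl)).resolve_left (hσ i j k l h), mul_zero]
    · rw [hsingle.2 h, zero_mul]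
end
end

section
/- Let U be a 6×6 complex unitary matrix such that some row has support of size exactly 4 and no row has support of size 5 or more. Then at least one of the following holds: (i) there is a row r₀ with support of size 4, another row r₁ ≠ r₀ with the same support as r₀, and a further row with support of size 2 contained in the support of r₀; or (ii) there are at least four rows with support of size at least 3. Moreover, in either case, U has at least four rows with support of size at least 2. -/
/-!
Rows and columns of a unitary matrix are unit vectors, so counting the mass of the columns in a
set `P` shows that at most `#P` rows are supported in `P`, and that if exactly `#P` are, every other
row vanishes on `P`. Orthogonality shows that two rows (or two columns) never overlap in exactly one
position; hence the support of a weight-two row is contained in, or disjoint from, that of any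
other row.

Let `S` be the support of a weight-four row `r`. A row of weight at most two lies in `S` (and then
has weight two) or in the two-element complement of `S`, which holds at most two rows; this gives
at least four rows of weight at least two. If at most three rows have weight at least three, some
weight-two row `s₁` lies in `S`. Either a second weight-two row lies in `S`, necessarily on the pair
`S \ supp s₁`, or two rows fill the complement of `S`. In both cases, if no other row had support
`S`, two columns in `S` would overlap only in the row `r`.
-/

noncomputable section

/-- The support of the `i`-th row of a matrix: the set of columns with a nonzero entry. -/
def rowSupp (U : Matrix (Fin 6) (Fin 6) ℂ) (i : Fin 6) : Finset (Fin 6) :=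
  Finset.univ.filter fun j => U i j ≠ 0

open ComplexConjugate Finset

namespace Matrix

variable {n : Type*} [Fintype n] [DecidableEq n] {U : Matrix n n ℂ}

theorem sum_mul_conj_of_mem_unitaryGroup (hU : U ∈ unitaryGroup n ℂ) (a b : n) :
    ∑ j, U a j * conj (U b j) = if a = b then 1 else 0 := by
  simpa [mul_apply, one_apply] using congrFun (congrFun (mem_unitaryGroup_iff.mp hU) a) b

theorem sum_norm_sq_row_of_mem_unitaryGroup (hU : U ∈ unitaryGroup n ℂ) (a : n) :
    ∑ j, ‖U a j‖ ^ 2 = 1 := by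
  have h := sum_mul_conj_of_mem_unitaryGroup hU a a
  simp only [Complex.mul_conj', if_pos] at h
  exact_mod_cast h

theorem sum_norm_sq_col_of_mem_unitaryGroup (hU : U ∈ unitaryGroup n ℂ) (b : n) :
    ∑ i, ‖U i b‖ ^ 2 = 1 :=
  sum_norm_sq_row_of_mem_unitaryGroup (transpose_mem_unitaryGroup_iff.mpr hU) b

theorem card_add_sum_norm_sq_compl (hU : U ∈ unitaryGroup n ℂ) {R P : Finset n}
    (h : ∀ i ∈ R, ∀ j ∉ P, U i j = 0) :
    (#R : ℝ) + ∑ i ∈ Rᶜ, ∑ j ∈ P, ‖U i j‖ ^ 2 = #P := by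
  have hrow : ∀ i ∈ R, ∑ j ∈ P, ‖U i j‖ ^ 2 = 1 := fun i hi => by
    rw [← sum_norm_sq_row_of_mem_unitaryGroup hU i]
    exact sum_subset (subset_univ P) fun j _ hj => by simp [h i hi j hj]
  calc (#R : ℝ) + ∑ i ∈ Rᶜ, ∑ j ∈ P, ‖U i j‖ ^ 2
      = ∑ i ∈ R, ∑ j ∈ P, ‖U i j‖ ^ 2 + ∑ i ∈ Rᶜ, ∑ j ∈ P, ‖U i j‖ ^ 2 := by
        rw [sum_congr rfl hrow]; simp
    _ = ∑ j ∈ P, ∑ i, ‖U i j‖ ^ 2 := by rw [sum_add_sum_compl, sum_comm]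
    _ = #P := by simp [sum_norm_sq_col_of_mem_unitaryGroup hU]

theorem card_le_card_of_forall_eq_zero (hU : U ∈ unitaryGroup n ℂ) {R P : Finset n}
    (h : ∀ i ∈ R, ∀ j ∉ P, U i j = 0) : #R ≤ #P := by
  have hsum := card_add_sum_norm_sq_compl hU h
  have hnonneg : 0 ≤ ∑ i ∈ Rᶜ, ∑ j ∈ P, ‖U i j‖ ^ 2 := by positivity
  exact_mod_cast (by linarith : (#R : ℝ) ≤ #P)

theorem eq_zero_of_forall_eq_zero_of_card_eq (hU : U ∈ unitaryGroup n ℂ) {R P : Finset n}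
    (h : ∀ i ∈ R, ∀ j ∉ P, U i j = 0) (hRP : #R = #P) {i j : n} (hi : i ∉ R) (hj : j ∈ P) :
    U i j = 0 := by
  have hsum := card_add_sum_norm_sq_compl hU h
  rw [hRP, add_eq_left, sum_eq_zero_iff_of_nonneg fun _ _ => by positivity] at hsum
  have hrow := hsum i (mem_compl.mpr hi)
  rw [sum_eq_zero_iff_of_nonneg fun _ _ => by positivity] at hrow
  simpa using hrow j hj

theorem eq_zero_or_eq_zero_of_rows_meet_only_at (hU : U ∈ unitaryGroup n ℂ) {a b j : n}
    (hab : a ≠ b) (h : ∀ m ≠ j, U a m = 0 ∨ U b m = 0) : U a j = 0 ∨ U b j = 0 := by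
  have horth := sum_mul_conj_of_mem_unitaryGroup hU a b
  rw [if_neg hab, Fintype.sum_eq_single j fun m hm => by rcases h m hm with h | h <;> simp [h]]
    at horth
  simpa using horth

theorem eq_zero_or_eq_zero_of_cols_meet_only_at (hU : U ∈ unitaryGroup n ℂ) {a b j : n}
    (hab : a ≠ b) (h : ∀ i ≠ j, U i a = 0 ∨ U i b = 0) : U j a = 0 ∨ U j b = 0 :=
  eq_zero_or_eq_zero_of_rows_meet_only_at (transpose_mem_unitaryGroup_iff.mpr hU) hab h

theorem eq_zero_iff_eq_zero_of_row_supported_on_pair (hU : U ∈ unitaryGroup n ℂ)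
    {s h j k : n} (hh : h ≠ s) (hs : ∀ m, m ≠ j → m ≠ k → U s m = 0)
    (hj : U s j ≠ 0) (hk : U s k ≠ 0) : U h j = 0 ↔ U h k = 0 := by
  have step : ∀ {x y : n}, (∀ m, m ≠ x → m ≠ y → U s m = 0) → U s y ≠ 0 → U h x = 0 → U h y = 0 :=
    fun {x y} hoff hy hx => (eq_zero_or_eq_zero_of_rows_meet_only_at hU hh fun m hm =>
      if hmx : m = x then Or.inl (hmx ▸ hx) else Or.inr (hoff m hmx hm)).resolve_right hy
  exact ⟨step hs hk, step (fun m hk' hj' => hs m hj' hk') hj⟩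

end Matrix

open Matrix

section RowSupport

variable {U : Matrix (Fin 6) (Fin 6) ℂ}

@[simp]
theorem mem_rowSupp {i j : Fin 6} : j ∈ rowSupp U i ↔ U i j ≠ 0 := by
  simp [rowSupp]

theorem rowSupp_subset_iff {i : Fin 6} {P : Finset (Fin 6)} :
    rowSupp U i ⊆ P ↔ ∀ j ∉ P, U i j = 0 := by
  simp only [subset_iff, mem_rowSupp]
  exact forall_congr' fun j => not_imp_comm

theorem disjoint_rowSupp_iff {i : Fin 6} {P : Finset (Fin 6)} :
    Disjoint (rowSupp U i) P ↔ ∀ j ∈ P, U i j = 0 := by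
  simp [disjoint_right]

theorem card_le_card_of_forall_rowSupp_subset (hU : U ∈ unitaryGroup (Fin 6) ℂ)
    {R P : Finset (Fin 6)} (h : ∀ i ∈ R, rowSupp U i ⊆ P) : #R ≤ #P :=
  card_le_card_of_forall_eq_zero hU fun i hi => rowSupp_subset_iff.mp (h i hi)

theorem disjoint_rowSupp_of_card_eq (hU : U ∈ unitaryGroup (Fin 6) ℂ) {R P : Finset (Fin 6)}
    (h : ∀ i ∈ R, rowSupp U i ⊆ P) (hRP : #R = #P) {i : Fin 6} (hi : i ∉ R) :
    Disjoint (rowSupp U i) P :=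
  disjoint_rowSupp_iff.mpr fun _ hj => eq_zero_of_forall_eq_zero_of_card_eq hU
    (fun i hi => rowSupp_subset_iff.mp (h i hi)) hRP hi hj

theorem rowSupp_nonempty (hU : U ∈ unitaryGroup (Fin 6) ℂ) (i : Fin 6) :
    (rowSupp U i).Nonempty := by
  rw [nonempty_iff_ne_empty]
  intro h
  simpa using card_le_card_of_forall_rowSupp_subset hU (R := {i}) (P := ∅) (by simp [h])

theorem disjoint_rowSupp_of_card_eq_one (hU : U ∈ unitaryGroup (Fin 6) ℂ) {s h : Fin 6}
    (hs : #(rowSupp U s) = 1) (hh : h ≠ s) : Disjoint (rowSupp U s) (rowSupp U h) :=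
  (disjoint_rowSupp_of_card_eq hU (R := {s}) (by simp) (by simp [hs]) (by simpa using hh)).symm

theorem rowSupp_subset_or_disjoint_of_card_eq_two (hU : U ∈ unitaryGroup (Fin 6) ℂ)
    {s h : Fin 6} (hs : #(rowSupp U s) = 2) (hh : h ≠ s) :
    rowSupp U s ⊆ rowSupp U h ∨ Disjoint (rowSupp U s) (rowSupp U h) := by
  obtain ⟨j, k, hjk, hsjk⟩ := card_eq_two.mp hs
  have hmem : ∀ m, U s m ≠ 0 ↔ m = j ∨ m = k := fun m => by
    rw [← mem_rowSupp, hsjk, mem_insert, mem_singleton]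
  have hiff := eq_zero_iff_eq_zero_of_row_supported_on_pair hU hh
    (fun m hj hk => not_not.mp fun hm => by rcases (hmem m).mp hm with h | h <;> contradiction)
    ((hmem j).mpr (Or.inl rfl)) ((hmem k).mpr (Or.inr rfl))
  rw [hsjk, insert_subset_iff, singleton_subset_iff, disjoint_insert_left,
    disjoint_singleton_left, mem_rowSupp, mem_rowSupp]
  tauto

theorem card_compl_rowSupp {r : Fin 6} (hr : #(rowSupp U r) = 4) : #(rowSupp U r)ᶜ = 2 := by
  rw [card_compl, hr]; rfl

theorem rowSupp_subset_compl_or_of_card_le_two (hU : U ∈ unitaryGroup (Fin 6) ℂ) {r i : Fin 6}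
    (hr : #(rowSupp U r) = 4) (hi : #(rowSupp U i) ≤ 2) :
    rowSupp U i ⊆ (rowSupp U r)ᶜ ∨ (#(rowSupp U i) = 2 ∧ rowSupp U i ⊆ rowSupp U r) := by
  have hri : r ≠ i := by rintro rfl; omega
  have hpos := (rowSupp_nonempty hU i).card_pos
  obtain hi1 | hi2 : #(rowSupp U i) = 1 ∨ #(rowSupp U i) = 2 := by omega
  · exact Or.inl (subset_compl_iff_disjoint_right.mpr (disjoint_rowSupp_of_card_eq_one hU hi1 hri))
  · exact (rowSupp_subset_or_disjoint_of_card_eq_two hU hi2 hri).symm.imp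
      subset_compl_iff_disjoint_right.mpr fun hsub => ⟨hi2, hsub⟩

theorem card_filter_rowSupp_subset_compl_le_two (hU : U ∈ unitaryGroup (Fin 6) ℂ) {r : Fin 6}
    (hr : #(rowSupp U r) = 4) : #{i | rowSupp U i ⊆ (rowSupp U r)ᶜ} ≤ 2 :=
  card_compl_rowSupp hr ▸ card_le_card_of_forall_rowSupp_subset hU fun _ hi => (mem_filter.mp hi).2

theorem four_le_card_filter_two_le_card_rowSupp (hU : U ∈ unitaryGroup (Fin 6) ℂ) {r : Fin 6}
    (hr : #(rowSupp U r) = 4) : 4 ≤ #{i | 2 ≤ #(rowSupp U i)} := by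
  have hlight : #{i | ¬2 ≤ #(rowSupp U i)} ≤ 2 := by
    refine (card_le_card fun i hi => ?_).trans (card_filter_rowSupp_subset_compl_le_two hU hr)
    simp only [mem_filter, mem_univ, true_and, not_le] at hi ⊢
    exact (rowSupp_subset_compl_or_of_card_le_two hU hr hi.le).resolve_right fun h => by omega
  have := card_filter_add_card_filter_not (s := univ) fun i => 2 ≤ #(rowSupp U i)
  simp only [card_univ, Fintype.card_fin] at this
  omega

theorem exists_rowSupp_eq_of_two_pair_rows (hU : U ∈ unitaryGroup (Fin 6) ℂ)
    (h5 : ∀ i, #(rowSupp U i) ≤ 4) {r s₁ s₂ : Fin 6} (hr : #(rowSupp U r) = 4)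
    (hs₁ : #(rowSupp U s₁) = 2) (hs₁r : rowSupp U s₁ ⊆ rowSupp U r)
    (hs₂ : #(rowSupp U s₂) = 2) (hs₂r : rowSupp U s₂ ⊆ rowSupp U r) (hs : s₂ ≠ s₁) :
    ∃ h, h ≠ r ∧ rowSupp U h = rowSupp U r := by
  have hrs₁ : r ≠ s₁ := by rintro rfl; omega
  have hrs₂ : r ≠ s₂ := by rintro rfl; omega
  obtain ⟨p, hp⟩ := rowSupp_nonempty hU s₁
  obtain ⟨q, hq⟩ := rowSupp_nonempty hU s₂
  have hdisj : Disjoint (rowSupp U s₁) (rowSupp U s₂) := by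
    refine (rowSupp_subset_or_disjoint_of_card_eq_two hU hs₁ hs).resolve_left fun hsub => ?_
    have heq : rowSupp U s₁ = rowSupp U s₂ := eq_of_subset_of_card_le hsub (by omega)
    -- two rows supported on the same pair of columns leave nothing of those columns to `r`
    have hr_disj := disjoint_rowSupp_of_card_eq hU (R := {s₁, s₂}) (P := rowSupp U s₁)
      (by simp [heq]) (by rw [card_pair hs.symm, hs₁]) (i := r) (by simp [hrs₁, hrs₂])
    exact disjoint_left.mp hr_disj (hs₁r hp) hp
  have hunion : #(rowSupp U s₁ ∪ rowSupp U s₂) = 4 := by rw [card_union_of_disjoint hdisj]; omega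
  have hS : rowSupp U s₁ ∪ rowSupp U s₂ = rowSupp U r :=
    eq_of_subset_of_card_le (union_subset hs₁r hs₂r) (by omega)
  by_contra! hno
  have hmiss : ∀ h ≠ r, U h p = 0 ∨ U h q = 0 := by
    intro h hhr
    by_cases h₁ : h = s₁
    · exact Or.inr (mem_rowSupp.not_left.mp (h₁ ▸ disjoint_right.mp hdisj hq))
    by_cases h₂ : h = s₂
    · exact Or.inl (mem_rowSupp.not_left.mp (h₂ ▸ disjoint_left.mp hdisj hp))
    by_contra! hpq
    have hP := (rowSupp_subset_or_disjoint_of_card_eq_two hU hs₁ h₁).resolve_right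
      (not_disjoint_iff.mpr ⟨p, hp, mem_rowSupp.mpr hpq.1⟩)
    have hQ := (rowSupp_subset_or_disjoint_of_card_eq_two hU hs₂ h₂).resolve_right
      (not_disjoint_iff.mpr ⟨q, hq, mem_rowSupp.mpr hpq.2⟩)
    exact hno h hhr (hS ▸ (eq_of_subset_of_card_le (union_subset hP hQ) (hunion ▸ h5 h)).symm)
  have hpq : p ≠ q := fun hpq => disjoint_left.mp hdisj hp (hpq ▸ hq)
  rcases eq_zero_or_eq_zero_of_cols_meet_only_at hU hpq hmiss with h | h
  · exact mem_rowSupp.mp (hs₁r hp) h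
  · exact mem_rowSupp.mp (hs₂r hq) h

theorem exists_rowSupp_eq_of_unique_pair_row (hU : U ∈ unitaryGroup (Fin 6) ℂ)
    {r s₁ : Fin 6} {R : Finset (Fin 6)} (hr : #(rowSupp U r) = 4)
    (hs₁ : #(rowSupp U s₁) = 2) (hs₁r : rowSupp U s₁ ⊆ rowSupp U r)
    (huniq : ∀ s, #(rowSupp U s) = 2 → rowSupp U s ⊆ rowSupp U r → s = s₁)
    (hR : ∀ i ∈ R, rowSupp U i ⊆ (rowSupp U r)ᶜ) (hRcard : #R = 2) :
    ∃ h, h ≠ r ∧ rowSupp U h = rowSupp U r := by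
  obtain ⟨q₁, q₂, hq, hQ⟩ := card_eq_two.mp
    (by rw [card_sdiff_of_subset hs₁r]; omega : #(rowSupp U r \ rowSupp U s₁) = 2)
  have hq₁ : q₁ ∈ rowSupp U r \ rowSupp U s₁ := hQ ▸ mem_insert_self _ _
  have hq₂ : q₂ ∈ rowSupp U r \ rowSupp U s₁ := hQ ▸ mem_insert_of_mem (mem_singleton_self _)
  rw [mem_sdiff] at hq₁ hq₂
  by_contra! hno
  have hmiss : ∀ h ≠ r, U h q₁ = 0 ∨ U h q₂ = 0 := by
    intro h hhr
    by_cases hhR : h ∈ R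
    · exact Or.inl (mem_rowSupp.not_left.mp fun hm => mem_compl.mp (hR h hhR hm) hq₁.1)
    by_cases h₁ : h = s₁
    · exact Or.inl (mem_rowSupp.not_left.mp (h₁ ▸ hq₁.2))
    by_contra! hqq
    have hqh : rowSupp U r \ rowSupp U s₁ ⊆ rowSupp U h := by
      rw [hQ, insert_subset_iff, singleton_subset_iff, mem_rowSupp, mem_rowSupp]
      exact hqq
    -- the rows of `R` use up the columns outside `rowSupp U r`
    have hhr_sub : rowSupp U h ⊆ rowSupp U r := disjoint_compl_right_iff.mp
      (disjoint_rowSupp_of_card_eq hU hR (hRcard.trans (card_compl_rowSupp hr).symm) hhR)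
    rcases rowSupp_subset_or_disjoint_of_card_eq_two hU hs₁ h₁ with hP | hP
    · refine hno h hhr (hhr_sub.antisymm fun c hc => ?_)
      by_cases hcs : c ∈ rowSupp U s₁
      exacts [hP hcs, hqh (mem_sdiff.mpr ⟨hc, hcs⟩)]
    · have hhQ : rowSupp U h = rowSupp U r \ rowSupp U s₁ :=
        (subset_sdiff.mpr ⟨hhr_sub, hP.symm⟩).antisymm hqh
      exact h₁ (huniq h (by rw [hhQ, hQ, card_pair hq]) (hhQ ▸ sdiff_subset))
  rcases eq_zero_or_eq_zero_of_cols_meet_only_at hU hq hmiss with h | h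
  · exact mem_rowSupp.mp hq₁.1 h
  · exact mem_rowSupp.mp hq₂.1 h

theorem exists_twin_and_pair_rows (hU : U ∈ unitaryGroup (Fin 6) ℂ)
    (h5 : ∀ i, #(rowSupp U i) ≤ 4) {r : Fin 6} (hr : #(rowSupp U r) = 4)
    (hfew : #{i | 3 ≤ #(rowSupp U i)} < 4) :
    ∃ r₁ s, r₁ ≠ r ∧ rowSupp U r₁ = rowSupp U r ∧
      #(rowSupp U s) = 2 ∧ rowSupp U s ⊆ rowSupp U r := by
  set T : Finset (Fin 6) := {i | rowSupp U i ⊆ (rowSupp U r)ᶜ}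
  set P : Finset (Fin 6) := {i | #(rowSupp U i) = 2 ∧ rowSupp U i ⊆ rowSupp U r}
  have hlight : 3 ≤ #{i | ¬3 ≤ #(rowSupp U i)} := by
    have := card_filter_add_card_filter_not (s := univ) fun i => 3 ≤ #(rowSupp U i)
    simp only [card_univ, Fintype.card_fin] at this
    omega
  have hcover : #{i | ¬3 ≤ #(rowSupp U i)} ≤ #T + #P := by
    refine (card_le_card fun i hi => ?_).trans (card_union_le T P)
    simp only [T, P, mem_union, mem_filter, mem_univ, true_and, not_le] at hi ⊢
    exact rowSupp_subset_compl_or_of_card_le_two hU hr (by omega)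
  have hT : #T ≤ 2 := card_filter_rowSupp_subset_compl_le_two hU hr
  obtain ⟨s₁, hs₁⟩ : P.Nonempty := card_pos.mp (by omega)
  obtain ⟨hs₁c, hs₁r⟩ := (mem_filter.mp hs₁).2
  obtain ⟨h, hhr, hh⟩ : ∃ h, h ≠ r ∧ rowSupp U h = rowSupp U r := by
    by_cases hP : ∃ s₂ ∈ P, s₂ ≠ s₁
    · obtain ⟨s₂, hs₂, hne⟩ := hP
      obtain ⟨hs₂c, hs₂r⟩ := (mem_filter.mp hs₂).2
      exact exists_rowSupp_eq_of_two_pair_rows hU h5 hr hs₁c hs₁r hs₂c hs₂r hne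
    · push Not at hP
      have hP1 : #P ≤ 1 := card_le_one.mpr fun a ha b hb => (hP a ha).trans (hP b hb).symm
      exact exists_rowSupp_eq_of_unique_pair_row hU hr hs₁c hs₁r
        (fun s hs hsr => hP s (by simp [P, hs, hsr])) (R := T) (fun i hi => (mem_filter.mp hi).2)
        (by omega)
  exact ⟨h, s₁, hhr, hh, hs₁c, hs₁r⟩

end RowSupport

/-- If a `6 × 6` unitary matrix has a row of weight four and no row of weight five or
more, then either (i) there are two rows of weight four with the same support and a
further row of weight two whose support is contained in it, or (ii) there are at least
four rows of weight at least three. In both cases, there are at least four rows of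
weight at least two. -/
theorem unitary_pattern_weight_four (U : Matrix (Fin 6) (Fin 6) ℂ)
    (hU : U ∈ Matrix.unitaryGroup (Fin 6) ℂ)
    (h4 : ∃ r, (rowSupp U r).card = 4)
    (h5 : ∀ r, (rowSupp U r).card ≤ 4) :
    ((∃ r₀ r₁ r₂ : Fin 6, (rowSupp U r₀).card = 4 ∧
        r₁ ≠ r₀ ∧ rowSupp U r₁ = rowSupp U r₀ ∧
        r₂ ≠ r₀ ∧ r₂ ≠ r₁ ∧ (rowSupp U r₂).card = 2 ∧
        rowSupp U r₂ ⊆ rowSupp U r₀) ∨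
      4 ≤ (Finset.univ.filter fun i => 3 ≤ (rowSupp U i).card).card) ∧
    4 ≤ (Finset.univ.filter fun i => 2 ≤ (rowSupp U i).card).card := by
  obtain ⟨r, hr⟩ := h4
  refine ⟨or_iff_not_imp_right.mpr fun hfew => ?_, four_le_card_filter_two_le_card_rowSupp hU hr⟩
  obtain ⟨r₁, s, hr₁, hr₁r, hs, hsr⟩ := exists_twin_and_pair_rows hU h5 hr (by omega)
  exact ⟨r, r₁, s, hr, hr₁, hr₁r, by rintro rfl; omega, by rintro rfl; rw [hr₁r] at hs; omega,
    hs, hsr⟩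
end
end

section
/- Let Ψ and Φ be orthogonal quantum Latin squares of order 6 in standard form. If some entry Ψ_{ij} of Ψ has weight 4, then every entry Φ_{kj} of Φ in the same column j has weight 1 (i.e., is a unit scalar multiple of a standard basis vector). -/
noncomputable section

/-- A quantum Latin square of order 6 is in standard form if its first row is
`(e₁, …, e₆)`, the standard basis vectors in order. -/
def StdForm (Ψ : Fin 6 → Fin 6 → EuclideanSpace ℂ (Fin 6)) : Prop :=
  ∀ j, Ψ 0 j = EuclideanSpace.single j (1 : ℂ)

/-!
Fix the column `j` and write `ψ k = Ψ k j`, `φ k = Φ k j`: two orthonormal bases of `ℂ⁶`.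
Orthogonality against the first row, where both squares read `e_s`, says that `ψ k` and `φ k`
have disjoint supports for `k ≠ 0`. If `u = ψ i` has weight four, its support is `{j, t}ᶜ`;
then `φ i` lives on `{t}` and the four remaining `φ k` live on `S = {j, t}ᶜ`. Orthogonal vectors
never share exactly one support point, and by Parseval for the basis `ψ` every pair of points of
`S` lies in the support of some `ψ k`, hence outside that of `φ k`. The only pattern of supports
left besides four singletons is `{y₁}, {y₂}, P, P` with `P = S \ {y₁, y₂}`. There the two `ψ`s
of the rows supported on `P` span `u^⊥ ∩ ℂ^{(P ∪ {j})ᶜ}`, which pushes the other two into `ℂ^P`,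
where two orthonormal vectors cannot both be orthogonal to `u`.
-/

open Finset Submodule
open scoped InnerProductSpace

section Support

variable {ι : Type*} [Fintype ι]

def supp (v : EuclideanSpace ℂ ι) : Finset ι := univ.filter fun s => v s ≠ 0

@[simp]
lemma mem_supp {v : EuclideanSpace ℂ ι} {s : ι} : s ∈ supp v ↔ v s ≠ 0 := by
  simp [supp]

lemma supp_nonempty {v : EuclideanSpace ℂ ι} (hv : v ≠ 0) : (supp v).Nonempty := by
  contrapose! hv
  ext s
  simpa using fun h => notMem_empty s (hv ▸ mem_supp.mpr h)

lemma inner_eq_sum_mul (v w : EuclideanSpace ℂ ι) :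
    ⟪v, w⟫_ℂ = ∑ s, starRingEnd ℂ (v s) * w s := by
  simp [PiLp.inner_apply, mul_comm]

lemma span_range_le_orthogonal {κ : Type*} {v : κ → EuclideanSpace ℂ ι} {z : EuclideanSpace ℂ ι}
    (hz : ∀ k, ⟪z, v k⟫_ℂ = 0) : span ℂ (Set.range v) ≤ (ℂ ∙ z)ᗮ :=
  span_le.mpr <| Set.range_subset_iff.mpr fun k =>
    mem_orthogonal_singleton_iff_inner_right.mpr (hz k)

variable [DecidableEq ι]

lemma card_supp_inter_ne_one {v w : EuclideanSpace ℂ ι} (h : ⟪v, w⟫_ℂ = 0) :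
    (supp v ∩ supp w).card ≠ 1 := by
  intro h1
  obtain ⟨s, hs⟩ := card_eq_one.mp h1
  have hsvw : s ∈ supp v ∩ supp w := hs ▸ mem_singleton_self s
  rw [mem_inter, mem_supp, mem_supp] at hsvw
  rw [inner_eq_sum_mul, sum_eq_single s] at h
  · simp_all
  · intro x _ hxs
    have : x ∉ supp v ∩ supp w := hs ▸ fun hx => hxs (mem_singleton.mp hx)
    simp only [mem_inter, mem_supp, not_and_or, not_not] at this
    rcases this with h0 | h0 <;> simp [h0]
  · simp

lemma mem_span_single_of_supp_subset {T : Finset ι} {v : EuclideanSpace ℂ ι} (hv : supp v ⊆ T) :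
    v ∈ span ℂ (Set.range fun s : T => EuclideanSpace.single (s : ι) (1 : ℂ)) := by
  have hsum : v = ∑ s : T, v s • EuclideanSpace.single (s : ι) (1 : ℂ) := by
    ext x
    rw [sum_coe_sort T fun s => v s • EuclideanSpace.single s (1 : ℂ)]
    by_cases hx : x ∈ T
    · simp [WithLp.ofLp_sum, Pi.single_apply, hx]
    · simpa [WithLp.ofLp_sum, Pi.single_apply, hx] using fun h => hx (hv (mem_supp.mpr h))
  rw [hsum]
  exact sum_mem fun s _ => smul_mem _ _ (subset_span ⟨s, rfl⟩)

lemma apply_eq_zero_of_forall_inner_eq_zero {κ : Type*} [Fintype κ] {v : κ → EuclideanSpace ℂ ι}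
    (hv : LinearIndependent ℂ v) {T : Finset ι} (hvT : ∀ k, supp (v k) ⊆ T)
    (hcard : T.card ≤ Fintype.card κ) {z : EuclideanSpace ℂ ι} (hz : ∀ k, ⟪z, v k⟫_ℂ = 0) :
    ∀ s ∈ T, z s = 0 := by
  set W := span ℂ (Set.range fun s : T => EuclideanSpace.single (s : ι) (1 : ℂ))
  have hW : span ℂ (Set.range v) = W := by
    apply Submodule.eq_of_le_of_finrank_le
    · exact span_le.mpr (Set.range_subset_iff.mpr fun k => mem_span_single_of_supp_subset (hvT k))
    · have : LinearIndependent ℂ fun s : T => EuclideanSpace.single (s : ι) (1 : ℂ) :=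
        (EuclideanSpace.orthonormal_single.comp _ Subtype.val_injective).linearIndependent
      rwa [finrank_span_eq_card hv, finrank_span_eq_card this, Fintype.card_coe]
  intro s hs
  have hsv : EuclideanSpace.single s (1 : ℂ) ∈ span ℂ (Set.range v) :=
    hW ▸ subset_span ⟨⟨s, hs⟩, rfl⟩
  simpa [EuclideanSpace.inner_single_right] using
    mem_orthogonal_singleton_iff_inner_right.mp (span_range_le_orthogonal hz hsv)

-- `u` keeps `e_a` out of the span of `v`, so that `v` and `e_a` together span `ℂ^T`.
lemma apply_eq_zero_of_forall_inner_eq_zero_of_apply_eq_zero {m : ℕ}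
    {v : Fin m → EuclideanSpace ℂ ι} (hv : Orthonormal ℂ v) {T : Finset ι}
    (hvT : ∀ k, supp (v k) ⊆ T) (hcard : T.card ≤ m + 1) {u : EuclideanSpace ℂ ι}
    (hu : ∀ k, ⟪u, v k⟫_ℂ = 0) {a : ι} (ha : a ∈ T) (hua : u a ≠ 0) {z : EuclideanSpace ℂ ι}
    (hz : ∀ k, ⟪z, v k⟫_ℂ = 0) (hza : z a = 0) : ∀ s ∈ T, z s = 0 := by
  have hsingle : EuclideanSpace.single a (1 : ℂ) ∉ span ℂ (Set.range v) := fun h => by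
    simpa [EuclideanSpace.inner_single_right, hua] using
      mem_orthogonal_singleton_iff_inner_right.mp (span_range_le_orthogonal hu h)
  refine apply_eq_zero_of_forall_inner_eq_zero
    (linearIndependent_finCons.mpr ⟨hv.linearIndependent, hsingle⟩) ?_ (by simpa using hcard) ?_
  · refine Fin.cases ?_ hvT
    intro s hs
    obtain rfl : s = a := by simpa [Pi.single_apply] using hs
    exact ha
  · refine Fin.cases ?_ hz
    simpa [EuclideanSpace.inner_single_right] using hza

lemma false_of_orthonormal_pairs {x w : Fin 2 → EuclideanSpace ℂ ι} (hx : Orthonormal ℂ x)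
    (hw : Orthonormal ℂ w) (hxw : ∀ a b, ⟪w a, x b⟫_ℂ = 0) {u : EuclideanSpace ℂ ι}
    (hux : ∀ b, ⟪u, x b⟫_ℂ = 0) (huw : ∀ a, ⟪u, w a⟫_ℂ = 0) {T P : Finset ι} (hT : T.card ≤ 3)
    (hP : P.card ≤ 2) (hxT : ∀ b, supp (x b) ⊆ T) (hwTP : ∀ a, supp (w a) ⊆ T ∪ P)
    {y : Fin 2 → ι} (hyT : ∀ a, y a ∈ T) (hwy : ∀ a, w a (y a) = 0) (huy : ∀ a, u (y a) ≠ 0)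
    {c : ι} (hc : c ∈ P) (huc : u c ≠ 0) : False := by
  have hwP : ∀ a, supp (w a) ⊆ P := by
    intro a s hs
    have hwT := apply_eq_zero_of_forall_inner_eq_zero_of_apply_eq_zero hx hxT hT hux (hyT a)
      (huy a) (hxw a) (hwy a)
    exact (mem_union.mp (hwTP a hs)).resolve_left fun h => mem_supp.mp hs (hwT s h)
  exact huc (apply_eq_zero_of_forall_inner_eq_zero hw.linearIndependent hwP
    (by simpa using hP) huw c hc)

-- Parseval: distinct columns of the unitary matrix `(v k s)` are orthogonal.
lemma Orthonormal.exists_ne_apply_ne_zero {κ : Type*} [Fintype κ] {v : κ → EuclideanSpace ℂ ι}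
    (hv : Orthonormal ℂ v) (hcard : Fintype.card κ = Fintype.card ι)
    {i : κ} {s s' : ι} (hss' : s ≠ s') (hs : v i s ≠ 0) (hs' : v i s' ≠ 0) :
    ∃ k ≠ i, v k s ≠ 0 ∧ v k s' ≠ 0 := by
  have hspan : span ℂ (Set.range v) = ⊤ :=
    hv.linearIndependent.span_eq_top_of_card_eq_finrank' (by simpa using hcard)
  have hparseval := (OrthonormalBasis.mk hv hspan.ge).sum_inner_mul_inner
    (EuclideanSpace.single s 1) (EuclideanSpace.single s' 1)
  simp only [OrthonormalBasis.coe_mk, EuclideanSpace.inner_single_left,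
    EuclideanSpace.inner_single_right, map_one, one_mul, PiLp.single_apply, hss'.symm,
    if_false] at hparseval
  by_contra! h
  rw [sum_eq_single i (fun k _ hk => by by_cases h0 : v k s = 0 <;> simp [h0, h k hk]) (by simp)]
    at hparseval
  simp [hs, hs'] at hparseval

end Support

section Combinatorics

variable {κ ι : Type*}

lemma eq_of_subset_of_card_ne_one {A P : Finset ι} (hAP : A ⊆ P) (hP : P.card = 2)
    (hA : A.Nonempty) (h1 : A.card ≠ 1) : A = P :=
  eq_of_subset_of_card_le hAP (by have := card_le_card hAP; have := hA.card_pos; omega)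

variable [DecidableEq ι]

lemma card_sdiff_pair {S : Finset ι} (hS : S.card = 4) {y x : ι} (hy : y ∈ S) (hx : x ∈ S)
    (hyx : y ≠ x) : (S \ {y, x}).card = 2 := by
  rw [card_sdiff_of_subset (by simp [insert_subset_iff, hy, hx]), card_pair hyx, hS]

lemma card_sdiff_pair_inter_sdiff_pair {S : Finset ι} (hS : S.card = 4) {y x x' : ι} (hy : y ∈ S)
    (hx : x ∈ S) (hx' : x' ∈ S) (hxy : x ≠ y) (hx'y : x' ≠ y) (hxx' : x ≠ x') :
    (S \ {y, x} ∩ (S \ {y, x'})).card = 1 := by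
  rw [← sdiff_union_distrib, card_sdiff_of_subset (by simp [insert_subset_iff, hy, hx, hx']), hS,
    show ({y, x} ∪ {y, x'} : Finset ι) = {x', y, x} by ext; simp; tauto,
    card_insert_of_notMem (by simp [hx'y, hxx'.symm]), card_pair hxy.symm]

variable {A : κ → Finset ι} {R : Finset κ} {S : Finset ι}

lemma exists_ne_singletons (hS : S.card = 4) (hne : ∀ k ∈ R, (A k).Nonempty)
    (hsub : ∀ k ∈ R, A k ⊆ S) (hinter : ∀ k ∈ R, ∀ k' ∈ R, k ≠ k' → (A k ∩ A k').card ≠ 1)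
    (hcover : ∀ s ∈ S, ∀ s' ∈ S, s ≠ s' → ∃ k ∈ R, s ∉ A k ∧ s' ∉ A k) :
    ∃ k₁ ∈ R, ∃ k₂ ∈ R, ∃ y₁ y₂, y₁ ≠ y₂ ∧ A k₁ = {y₁} ∧ A k₂ = {y₂} := by
  by_contra! h
  obtain ⟨y, hyS, hy⟩ : ∃ y ∈ S, ∀ k ∈ R, ∀ z, A k = {z} → z = y := by
    by_cases hsing : ∃ k ∈ R, ∃ z, A k = {z}
    · obtain ⟨k, hk, z, hz⟩ := hsing
      refine ⟨z, hsub k hk (hz ▸ mem_singleton_self z), fun k' hk' z' hz' => ?_⟩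
      by_contra hzz
      exact h k' hk' k hk z' z hzz hz' hz
    · push Not at hsing
      obtain ⟨y, hy⟩ := card_pos.mp (by omega : 0 < S.card)
      exact ⟨y, hy, fun k hk z hz => absurd hz (hsing k hk z)⟩
  -- as no singleton row sits outside `y`, a row avoiding `{y, x}` is supported on `S \ {y, x}`
  have hcompl : ∀ x ∈ S, x ≠ y → ∃ k ∈ R, A k = S \ {y, x} := by
    intro x hx hxy
    obtain ⟨k, hk, hyk, hxk⟩ := hcover y hyS x hx hxy.symm
    refine ⟨k, hk, eq_of_subset_of_card_ne_one ?_ (card_sdiff_pair hS hyS hx hxy.symm)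
      (hne k hk) fun h1 => ?_⟩
    · intro s hs
      simp only [mem_sdiff, mem_insert, mem_singleton, not_or]
      exact ⟨hsub k hk hs, fun e => hyk (e ▸ hs), fun e => hxk (e ▸ hs)⟩
    · obtain ⟨z, hz⟩ := card_eq_one.mp h1
      exact hyk (hy k hk z hz ▸ hz ▸ mem_singleton_self z)
  obtain ⟨x, hx, x', hx', hxx'⟩ := one_lt_card.mp
    (by rw [card_erase_of_mem hyS]; omega : 1 < (S.erase y).card)
  obtain ⟨k, hk, hAk⟩ := hcompl x (mem_of_mem_erase hx) (ne_of_mem_erase hx)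
  obtain ⟨k', hk', hAk'⟩ := hcompl x' (mem_of_mem_erase hx') (ne_of_mem_erase hx')
  refine hinter k hk k' hk' (fun hkk' => ?_) ?_
  · have : x' ∈ A k := by
      rw [hAk]
      simp [mem_of_mem_erase hx', ne_of_mem_erase hx', hxx'.symm]
    rw [hkk', hAk'] at this
    simp at this
  · rw [hAk, hAk']
    exact card_sdiff_pair_inter_sdiff_pair hS hyS (mem_of_mem_erase hx) (mem_of_mem_erase hx')
      (ne_of_mem_erase hx) (ne_of_mem_erase hx') hxx'

lemma exists_eq_sdiff_of_card_ne_one [DecidableEq κ] (hR : R.card = 4) (hS : S.card = 4)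
    (hne : ∀ k ∈ R, (A k).Nonempty) (hsub : ∀ k ∈ R, A k ⊆ S)
    (hinter : ∀ k ∈ R, ∀ k' ∈ R, k ≠ k' → (A k ∩ A k').card ≠ 1)
    (hcover : ∀ s ∈ S, ∀ s' ∈ S, s ≠ s' → ∃ k ∈ R, s ∉ A k ∧ s' ∉ A k)
    {k : κ} (hk : k ∈ R) (hk1 : (A k).card ≠ 1) :
    ∃ k' ∈ R, k' ≠ k ∧ ∃ k₁ ∈ R, ∃ k₂ ∈ R, ∃ y₁ y₂, y₁ ≠ y₂ ∧ A k₁ = {y₁} ∧ A k₂ = {y₂} ∧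
      A k = S \ {y₁, y₂} ∧ A k' = S \ {y₁, y₂} := by
  obtain ⟨k₁, hk₁, k₂, hk₂, y₁, y₂, hy, hA₁, hA₂⟩ := exists_ne_singletons hS hne hsub hinter hcover
  have hy₁ : y₁ ∈ S := hsub k₁ hk₁ (hA₁ ▸ mem_singleton_self y₁)
  have hy₂ : y₂ ∈ S := hsub k₂ hk₂ (hA₂ ▸ mem_singleton_self y₂)
  have hnotMem : ∀ k' ∈ R, ∀ k'' ∈ R, ∀ y, A k'' = {y} → k' ≠ k'' → y ∉ A k' := by
    intro k' hk' k'' hk'' y hA hne' hy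
    exact hinter k'' hk'' k' hk' (Ne.symm hne')
      (by rw [hA, singleton_inter_of_mem hy, card_singleton])
  have hP : ∀ k' ∈ R, k' ≠ k₁ → k' ≠ k₂ → A k' ⊆ S \ {y₁, y₂} := by
    intro k' hk' h₁ h₂ s hs
    simp only [mem_sdiff, mem_insert, mem_singleton, not_or]
    exact ⟨hsub k' hk' hs, fun e => hnotMem k' hk' k₁ hk₁ y₁ hA₁ h₁ (e ▸ hs),
      fun e => hnotMem k' hk' k₂ hk₂ y₂ hA₂ h₂ (e ▸ hs)⟩
  have hk₁k : k ≠ k₁ := fun e => hk1 (by rw [e, hA₁, card_singleton])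
  have hk₂k : k ≠ k₂ := fun e => hk1 (by rw [e, hA₂, card_singleton])
  have hAk : A k = S \ {y₁, y₂} := eq_of_subset_of_card_ne_one (hP k hk hk₁k hk₂k)
    (card_sdiff_pair hS hy₁ hy₂ hy) (hne k hk) hk1
  obtain ⟨k', hk', hk'n⟩ := exists_mem_notMem_of_card_lt_card
    (lt_of_le_of_lt card_le_three (hR ▸ by norm_num) : ({k, k₁, k₂} : Finset κ).card < R.card)
  simp only [mem_insert, mem_singleton, not_or] at hk'n
  obtain ⟨hk'k, hk'k₁, hk'k₂⟩ := hk'n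
  have hsubk : A k' ⊆ A k := hAk ▸ hP k' hk' hk'k₁ hk'k₂
  refine ⟨k', hk', hk'k, k₁, hk₁, k₂, hk₂, y₁, y₂, hy, hA₁, hA₂, hAk,
    eq_of_subset_of_card_ne_one (hP k' hk' hk'k₁ hk'k₂) (card_sdiff_pair hS hy₁ hy₂ hy)
      (hne k' hk') ?_⟩
  simpa [inter_eq_left.mpr hsubk] using hinter k' hk' k hk hk'k

end Combinatorics

section Column

variable {κ ι : Type*} [Fintype ι] [DecidableEq ι]

lemma supp_single_one (j : ι) : supp (EuclideanSpace.single j (1 : ℂ)) = {j} := by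
  ext s
  simp

lemma exists_supp_eq_compl_pair {v : EuclideanSpace ℂ ι} (hv : (supp v).card + 2 = Fintype.card ι)
    {j : ι} (hj : v j = 0) : ∃ t ≠ j, supp v = {j, t}ᶜ := by
  obtain ⟨a, b, hab, h⟩ := card_eq_two.mp (by rw [card_compl]; omega : (supp v)ᶜ.card = 2)
  have hjab : j ∈ ({a, b} : Finset ι) := h ▸ by simpa using hj
  rw [← compl_compl (supp v), h]
  rcases (by simpa using hjab : j = a ∨ j = b) with rfl | rfl
  · exact ⟨b, hab.symm, rfl⟩
  · exact ⟨a, hab, by rw [pair_comm]⟩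

/-- Column `j` of two orthogonal quantum Latin squares whose row `r` is the standard basis:
orthogonality against the cells `(r, s)` amounts to disjointness of the supports in each row. -/
structure IsStdColumnPair (ψ φ : κ → EuclideanSpace ℂ ι) (r : κ) (j : ι) : Prop where
  orthonormal_left : Orthonormal ℂ ψ
  orthonormal_right : Orthonormal ℂ φ
  left_eq_single : ψ r = EuclideanSpace.single j 1
  right_eq_single : φ r = EuclideanSpace.single j 1
  disjoint : ∀ k ≠ r, Disjoint (supp (ψ k)) (supp (φ k))

lemma Orthonormal.apply_eq_zero_of_eq_single {v : κ → EuclideanSpace ℂ ι} (hv : Orthonormal ℂ v)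
    {r : κ} {j : ι} (hvr : v r = EuclideanSpace.single j 1) {k : κ} (hk : k ≠ r) : v k j = 0 := by
  simpa [hvr, EuclideanSpace.inner_single_left] using hv.2 hk.symm

namespace IsStdColumnPair

variable {ψ φ : κ → EuclideanSpace ℂ ι} {r : κ} {j : ι}

lemma left_apply_eq_zero (h : IsStdColumnPair ψ φ r j) {k : κ} (hk : k ≠ r) : ψ k j = 0 :=
  h.orthonormal_left.apply_eq_zero_of_eq_single h.left_eq_single hk

lemma right_apply_eq_zero (h : IsStdColumnPair ψ φ r j) {k : κ} (hk : k ≠ r) : φ k j = 0 :=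
  h.orthonormal_right.apply_eq_zero_of_eq_single h.right_eq_single hk

lemma supp_right_eq_singleton (h : IsStdColumnPair ψ φ r j) {i : κ} (hir : i ≠ r) {t : ι}
    (hu : supp (ψ i) = {j, t}ᶜ) : supp (φ i) = {t} := by
  refine (subset_singleton_iff.mp fun s hs => ?_).resolve_left
    (supp_nonempty (h.orthonormal_right.ne_zero i)).ne_empty
  have hsj : s ≠ j := fun e => mem_supp.mp hs (e ▸ h.right_apply_eq_zero hir)
  have hsu : s ∉ supp (ψ i) := disjoint_right.mp (h.disjoint i hir) hs
  simpa [hu, hsj] using hsu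

lemma supp_right_subset (h : IsStdColumnPair ψ φ r j) {i : κ} (hir : i ≠ r) {t : ι}
    (hu : supp (ψ i) = {j, t}ᶜ) {k : κ} (hkr : k ≠ r) (hki : k ≠ i) : supp (φ k) ⊆ {j, t}ᶜ := by
  intro s hs
  have ht : t ∉ supp (φ k) := fun ht => card_supp_inter_ne_one (h.orthonormal_right.2 hki.symm)
    (by rw [h.supp_right_eq_singleton hir hu, singleton_inter_of_mem ht, card_singleton])
  simp only [mem_compl, mem_insert, mem_singleton, not_or]
  exact ⟨fun e => mem_supp.mp hs (e ▸ h.right_apply_eq_zero hkr), fun e => ht (e ▸ hs)⟩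

lemma supp_left_subset (h : IsStdColumnPair ψ φ r j) {k : κ} (hkr : k ≠ r) :
    supp (ψ k) ⊆ (insert j (supp (φ k)))ᶜ := by
  intro s hs
  simp only [mem_compl, mem_insert, not_or]
  exact ⟨fun e => mem_supp.mp hs (e ▸ h.left_apply_eq_zero hkr),
    disjoint_left.mp (h.disjoint k hkr) hs⟩

lemma left_apply_eq_zero_of_mem (h : IsStdColumnPair ψ φ r j) {k : κ} (hkr : k ≠ r) {s : ι}
    (hs : s ∈ supp (φ k)) : ψ k s = 0 := by
  simpa using disjoint_right.mp (h.disjoint k hkr) hs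

lemma exists_notMem_supp_right [Fintype κ] (h : IsStdColumnPair ψ φ r j)
    (hcard : Fintype.card κ = Fintype.card ι) {i : κ}
    {s s' : ι} (hss' : s ≠ s') (hsj : s ≠ j) (hs : ψ i s ≠ 0) (hs' : ψ i s' ≠ 0) :
    ∃ k ≠ r, k ≠ i ∧ s ∉ supp (φ k) ∧ s' ∉ supp (φ k) := by
  obtain ⟨k, hki, hks, hks'⟩ := h.orthonormal_left.exists_ne_apply_ne_zero hcard hss' hs hs'
  have hkr : k ≠ r := by
    rintro rfl
    simp [h.left_eq_single, hsj] at hks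
  exact ⟨k, hkr, hki, disjoint_left.mp (h.disjoint k hkr) (mem_supp.mpr hks),
    disjoint_left.mp (h.disjoint k hkr) (mem_supp.mpr hks')⟩

section Order6

variable {ψ φ : Fin 6 → EuclideanSpace ℂ (Fin 6)} {r j : Fin 6}

lemma false_of_supp_right_eq_sdiff (h : IsStdColumnPair ψ φ r j) {i : Fin 6} (hir : i ≠ r)
    {t : Fin 6} (htj : t ≠ j) (hu : supp (ψ i) = {j, t}ᶜ) {k k' k₁ k₂ : Fin 6}
    (hk : k ∈ ({r, i}ᶜ : Finset (Fin 6))) (hk' : k' ∈ ({r, i}ᶜ : Finset (Fin 6)))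
    (hk₁ : k₁ ∈ ({r, i}ᶜ : Finset (Fin 6))) (hk₂ : k₂ ∈ ({r, i}ᶜ : Finset (Fin 6)))
    (hkk' : k ≠ k') {y₁ y₂ : Fin 6} (hy : y₁ ≠ y₂) (hA₁ : supp (φ k₁) = {y₁})
    (hA₂ : supp (φ k₂) = {y₂}) (hAk : supp (φ k) = {j, t}ᶜ \ {y₁, y₂})
    (hAk' : supp (φ k') = {j, t}ᶜ \ {y₁, y₂}) : False := by
  simp only [mem_compl, mem_insert, mem_singleton, not_or] at hk hk' hk₁ hk₂
  set P : Finset (Fin 6) := {j, t}ᶜ \ {y₁, y₂} with hP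
  have hy₁ := h.supp_right_subset hir hu hk₁.1 hk₁.2 (hA₁ ▸ mem_singleton_self y₁)
  have hy₂ := h.supp_right_subset hir hu hk₂.1 hk₂.2 (hA₂ ▸ mem_singleton_self y₂)
  have hPcard : P.card = 2 :=
    card_sdiff_pair (by rw [card_compl, card_pair htj.symm]; rfl) hy₁ hy₂ hy
  have hjP : j ∉ P := by simp [hP]
  have hTP : ∀ s, s ≠ j → s ∈ (insert j P)ᶜ ∪ P := fun s hsj => by
    by_cases hs : s ∈ P <;> simp [hs, hsj]
  have hyT : ∀ y ∈ ({y₁, y₂} : Finset (Fin 6)), y ∈ ({j, t}ᶜ : Finset (Fin 6)) →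
      y ∈ (insert j P)ᶜ := by
    intro y hy₁₂ hyS
    simp only [hP, mem_compl, mem_insert, mem_sdiff, mem_singleton] at hy₁₂ hyS ⊢
    tauto
  obtain ⟨c, hc⟩ : P.Nonempty := card_pos.mp (by omega)
  have hne : ∀ {a b : Fin 6}, supp (φ a) ≠ supp (φ b) → a ≠ b := fun hab e => hab (e ▸ rfl)
  have hP₁ : ({y₁} : Finset (Fin 6)) ≠ P := fun e => by simp [← e] at hPcard
  have hP₂ : ({y₂} : Finset (Fin 6)) ≠ P := fun e => by simp [← e] at hPcard
  refine false_of_orthonormal_pairs (x := ψ ∘ ![k, k']) (w := ψ ∘ ![k₁, k₂]) (u := ψ i)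
    (T := (insert j P)ᶜ) (P := P) (y := ![y₁, y₂])
    (h.orthonormal_left.comp _ (injective_pair_iff_ne.mpr hkk'))
    (h.orthonormal_left.comp _ (injective_pair_iff_ne.mpr (hne (by simpa [hA₁, hA₂] using hy))))
    ?_ ?_ ?_ (by rw [card_compl, card_insert_of_notMem hjP, hPcard]; rfl) hPcard.le ?_ ?_ ?_ ?_ ?_
    hc (mem_supp.mp (hu ▸ (mem_sdiff.mp hc).1))
  all_goals simp only [Fin.forall_fin_two, Function.comp_apply, Matrix.cons_val_zero,
    Matrix.cons_val_one]
  · exact ⟨⟨h.orthonormal_left.2 (hne (by rw [hA₁, hAk]; exact hP₁)),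
      h.orthonormal_left.2 (hne (by rw [hA₁, hAk']; exact hP₁))⟩,
      ⟨h.orthonormal_left.2 (hne (by rw [hA₂, hAk]; exact hP₂)),
      h.orthonormal_left.2 (hne (by rw [hA₂, hAk']; exact hP₂))⟩⟩
  · exact ⟨h.orthonormal_left.2 (Ne.symm hk.2), h.orthonormal_left.2 (Ne.symm hk'.2)⟩
  · exact ⟨h.orthonormal_left.2 (Ne.symm hk₁.2), h.orthonormal_left.2 (Ne.symm hk₂.2)⟩
  · exact ⟨hAk ▸ h.supp_left_subset hk.1, hAk' ▸ h.supp_left_subset hk'.1⟩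
  · exact ⟨fun s hs => hTP s fun e => mem_supp.mp hs (e ▸ h.left_apply_eq_zero hk₁.1),
      fun s hs => hTP s fun e => mem_supp.mp hs (e ▸ h.left_apply_eq_zero hk₂.1)⟩
  · exact ⟨hyT y₁ (by simp) hy₁, hyT y₂ (by simp) hy₂⟩
  · exact ⟨h.left_apply_eq_zero_of_mem hk₁.1 (by simp [hA₁]),
      h.left_apply_eq_zero_of_mem hk₂.1 (by simp [hA₂])⟩
  · exact ⟨mem_supp.mp (hu ▸ hy₁), mem_supp.mp (hu ▸ hy₂)⟩

theorem card_supp_right_eq_one (h : IsStdColumnPair ψ φ r j) {i : Fin 6}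
    (hi : (supp (ψ i)).card = 4) (k : Fin 6) : (supp (φ k)).card = 1 := by
  have hir : i ≠ r := by
    rintro rfl
    simp [h.left_eq_single, supp_single_one] at hi
  obtain ⟨t, htj, hu⟩ := exists_supp_eq_compl_pair (by simp [hi]) (h.left_apply_eq_zero hir)
  rcases eq_or_ne k r with rfl | hkr
  · rw [h.right_eq_single, supp_single_one, card_singleton]
  rcases eq_or_ne k i with rfl | hki
  · rw [h.supp_right_eq_singleton hir hu, card_singleton]
  by_contra hk1
  obtain ⟨k', hk', hk'k, k₁, hk₁, k₂, hk₂, y₁, y₂, hy, hA₁, hA₂, hAk, hAk'⟩ :=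
    exists_eq_sdiff_of_card_ne_one (A := fun m => supp (φ m)) (R := {r, i}ᶜ) (S := {j, t}ᶜ)
      (by rw [card_compl, card_pair hir.symm]; rfl) (by rw [card_compl, card_pair htj.symm]; rfl)
      (fun m _ => supp_nonempty (h.orthonormal_right.ne_zero m))
      (fun m hm => h.supp_right_subset hir hu (by simp_all) (by simp_all))
      (fun m _ m' _ hmm' => card_supp_inter_ne_one (h.orthonormal_right.2 hmm'))
      (fun s hs s' hs' hss' => by
        obtain ⟨m, hmr, hmi, hms⟩ := h.exists_notMem_supp_right rfl hss' (by simp_all)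
          (mem_supp.mp (hu ▸ hs)) (mem_supp.mp (hu ▸ hs'))
        exact ⟨m, by simp [hmr, hmi], hms⟩)
      (by simp [hkr, hki]) hk1
  exact h.false_of_supp_right_eq_sdiff hir htj hu (by simp [hkr, hki]) hk' hk₁ hk₂ hk'k.symm hy
    hA₁ hA₂ hAk hAk'

end Order6

end IsStdColumnPair

end Column

lemma isStdColumnPair_of_orthQLS {Ψ Φ : Fin 6 → Fin 6 → EuclideanSpace ℂ (Fin 6)} (hΨ : IsQLS Ψ)
    (hΦ : IsQLS Φ) (hO : OrthQLS Ψ Φ) (hsΨ : StdForm Ψ) (hsΦ : StdForm Φ) (j : Fin 6) :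
    IsStdColumnPair (fun k => Ψ k j) (fun k => Φ k j) 0 j where
  orthonormal_left := hΨ.2 j
  orthonormal_right := hΦ.2 j
  left_eq_single := hsΨ j
  right_eq_single := hsΦ j
  disjoint k hk := disjoint_left.mpr fun {s} hsΨk hsΦk => by
    have := hO 0 s k j (by simp [Ne.symm hk])
    rw [hsΨ s, hsΦ s, EuclideanSpace.inner_single_left, EuclideanSpace.inner_single_left] at this
    simp_all

/-- If one of two orthogonal quantum Latin squares of order 6 in standard form has an
entry of weight four, then the other square has only weight-one entries in that column. -/
theorem column_of_weight_four (Ψ Φ : Fin 6 → Fin 6 → EuclideanSpace ℂ (Fin 6))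
    (hΨ : IsQLS Ψ) (hΦ : IsQLS Φ) (hO : OrthQLS Ψ Φ)
    (hsΨ : StdForm Ψ) (hsΦ : StdForm Φ)
    (i j : Fin 6) (h : weight (Ψ i j) = 4) :
    ∀ k, weight (Φ k j) = 1 :=
  (isStdColumnPair_of_orthQLS hΨ hΦ hO hsΨ hsΦ j).card_supp_right_eq_one h
end
end

section
/- Let A be a classical Latin square of order 6 having a subsquare of order three with row set R, column set C and symbol set S, let Ψ be the quantum Latin square of order 6 whose (i,j) entry is the standard basis vector e_{A(i,j)} of ℂ^6, and let Φ be a quantum Latin square of order 6 orthogonal to Ψ. Then the nine entries Φ_{ij} with i ∈ R, j ∈ C are pairwise non-parallel: for distinct cells (i,j) ≠ (k,l) in R×C, Φ_{ij} is not a scalar multiple of Φ_{kl}. -/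
noncomputable section

/-- A classical Latin square of order `n`: every row and every column is a bijection. -/
def IsLatin {n : ℕ} (A : Fin n → Fin n → Fin n) : Prop :=
  (∀ i, Function.Bijective (A i)) ∧ (∀ j, Function.Bijective fun i => A i j)

/-!
Suppose `Φ i j = c • Φ k l` for distinct cells of `R × C`. Entries of `Φ` sharing a row, a column
or a symbol of `A` are orthogonal, so the two cells differ in row, column and symbol; hence
`S = {A i j, A i l, A k l}`, and the block outside `R × C` carries only symbols of `S` as well.
In each of the three columns outside `C`, the unit vector `Φ k l` is then orthogonal to every entry
except the one in the third row of `R` and the one with symbol `A i l`, so by Parseval these two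
entries carry the whole weight `1` of the column. The three columns thus carry weight `3`, while by
Bessel the third row of `R` and the orthonormal family of cells with symbol `A i l` carry at most
`1` each.
-/

open Finset

section Parseval

variable {𝕜 E ι : Type*} [RCLike 𝕜] [NormedAddCommGroup E] [InnerProductSpace 𝕜 E]
  [FiniteDimensional 𝕜 E] [Fintype ι] {v : ι → E}

theorem Orthonormal.sum_sq_norm_inner_right (hv : Orthonormal 𝕜 v)
    (hcard : Fintype.card ι = Module.finrank 𝕜 E) (x : E) :
    ∑ p, ‖inner 𝕜 (v p) x‖ ^ 2 = ‖x‖ ^ 2 := by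
  simpa using (OrthonormalBasis.mk hv
    (hv.linearIndependent.span_eq_top_of_card_eq_finrank' hcard).ge).sum_sq_norm_inner_right x

theorem Orthonormal.sq_norm_le_of_inner_eq_zero (hv : Orthonormal 𝕜 v)
    (hcard : Fintype.card ι = Module.finrank 𝕜 E) {x : E} (a : ι) (T : Finset ι)
    (hx : ∀ p ∉ T, p ≠ a → inner 𝕜 (v p) x = 0) :
    ‖x‖ ^ 2 ≤ ‖inner 𝕜 (v a) x‖ ^ 2 + ∑ p ∈ T, ‖inner 𝕜 (v p) x‖ ^ 2 := by
  classical
  calc ‖x‖ ^ 2 = ∑ p, ‖inner 𝕜 (v p) x‖ ^ 2 := (hv.sum_sq_norm_inner_right hcard x).symm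
    _ ≤ ∑ p, ((if p = a then ‖inner 𝕜 (v p) x‖ ^ 2 else 0) +
          if p ∈ T then ‖inner 𝕜 (v p) x‖ ^ 2 else 0) := by
      refine sum_le_sum fun p _ => ?_
      by_cases hpT : p ∈ T
      · split_ifs <;> simp
      by_cases hpa : p = a
      · subst hpa; simp [hpT]
      simp [hx p hpT hpa]
    _ = _ := by rw [sum_add_distrib, sum_ite_eq', sum_ite_mem, univ_inter, if_pos (mem_univ a)]

end Parseval

section LatinSquare

variable {n : ℕ} {A : Fin n → Fin n → Fin n} {R C S : Finset (Fin n)}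

theorem IsLatin.notMem_of_mem_col (hA : IsLatin A) (hsub : ∀ i ∈ R, ∀ j ∈ C, A i j ∈ S)
    (hRS : S.card ≤ R.card) {p q : Fin n} (hp : p ∉ R) (hq : q ∈ C) : A p q ∉ S := by
  have himage : R.image (fun i => A i q) = S :=
    eq_of_subset_of_card_le (image_subset_iff.2 fun i hi => hsub i hi q hq)
      (by rwa [card_image_of_injective _ (hA.2 q).1])
  intro hpq
  obtain ⟨i, hi, hiq⟩ := mem_image.1 (himage ▸ hpq)
  exact hp ((hA.2 q).1 hiq ▸ hi)

theorem IsLatin.mem_of_notMem_of_notMem (hA : IsLatin A) (hsub : ∀ i ∈ R, ∀ j ∈ C, A i j ∈ S)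
    (hRS : S.card ≤ R.card) (hn : n ≤ C.card + S.card) {p q : Fin n} (hp : p ∉ R)
    (hq : q ∉ C) : A p q ∈ S := by
  have himage : S = (univ \ C).image (A p) := by
    refine eq_of_subset_of_card_le (fun s hs => ?_) ?_
    · obtain ⟨j, rfl⟩ := (hA.1 p).2 s
      exact mem_image_of_mem _ (mem_sdiff.2 ⟨mem_univ j,
        fun hj => hA.notMem_of_mem_col hsub hRS hp hj hs⟩)
    · rw [card_image_of_injective _ (hA.1 p).1, card_sdiff_of_subset (subset_univ C),
        card_univ, Fintype.card_fin]
      omega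
  exact himage ▸ mem_image_of_mem _ (mem_sdiff.2 ⟨mem_univ q, hq⟩)

end LatinSquare

section QuantumLatinSquare

variable {n : ℕ} {A : Fin n → Fin n → Fin n} {Φ : Fin n → Fin n → EuclideanSpace ℂ (Fin n)}

theorem IsQLS.inner_eq_zero_of_row_or_col_or_symbol_eq (hΦ : IsQLS Φ)
    (hO : OrthQLS (fun i j => EuclideanSpace.single (A i j) (1 : ℂ)) Φ) {p q p' q' : Fin n}
    (hne : (p, q) ≠ (p', q')) (h : p = p' ∨ q = q' ∨ A p q = A p' q') :
    inner ℂ (Φ p q) (Φ p' q') = 0 := by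
  rcases h with rfl | rfl | hsym
  · exact (hΦ.1 p).2 fun h => hne (h ▸ rfl)
  · exact (hΦ.2 q).2 fun h => hne (h ▸ rfl)
  · simpa [hsym, EuclideanSpace.inner_single_left] using hO p q p' q' hne

theorem IsQLS.ne_of_eq_smul (hΦ : IsQLS Φ)
    (hO : OrthQLS (fun i j => EuclideanSpace.single (A i j) (1 : ℂ)) Φ) {i j k l : Fin n}
    {c : ℂ} (hc0 : c ≠ 0) (hne : (i, j) ≠ (k, l)) (hc : Φ i j = c • Φ k l) :
    i ≠ k ∧ j ≠ l ∧ A i j ≠ A k l := by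
  have hinner : inner ℂ (Φ i j) (Φ k l) ≠ 0 := by
    simpa [hc, inner_smul_left, inner_self_eq_norm_sq_to_K, (hΦ.1 k).1 l] using hc0
  refine ⟨?_, ?_, ?_⟩ <;> intro h <;>
    exact hinner (hΦ.inner_eq_zero_of_row_or_col_or_symbol_eq hO hne (by tauto))

theorem IsQLS.orthonormal_of_symbol_eq (hΦ : IsQLS Φ)
    (hO : OrthQLS (fun i j => EuclideanSpace.single (A i j) (1 : ℂ)) Φ) {σ : Fin n → Fin n}
    {s : Fin n} (hσ : ∀ q, A (σ q) q = s) : Orthonormal ℂ fun q => Φ (σ q) q :=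
  ⟨fun q => (hΦ.1 (σ q)).1 q, fun q q' hqq' => hΦ.inner_eq_zero_of_row_or_col_or_symbol_eq hO
    (fun h => hqq' (Prod.ext_iff.1 h).2) (Or.inr (Or.inr ((hσ q).trans (hσ q').symm)))⟩

theorem IsQLS.inner_eq_zero_of_row_or_symbol_eq_of_eq_smul (hΦ : IsQLS Φ)
    (hO : OrthQLS (fun i j => EuclideanSpace.single (A i j) (1 : ℂ)) Φ) {i j k l p q : Fin n}
    {c : ℂ} (hc0 : c ≠ 0) (hc : Φ i j = c • Φ k l) (hqj : q ≠ j) (hql : q ≠ l)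
    (h : (p = i ∨ A p q = A i j) ∨ (p = k ∨ A p q = A k l)) :
    inner ℂ (Φ p q) (Φ k l) = 0 := by
  rcases h with h | h
  · have hij := hΦ.inner_eq_zero_of_row_or_col_or_symbol_eq hO
      (fun e => hqj (Prod.ext_iff.1 e).2) (by tauto)
    rw [hc, inner_smul_right] at hij
    exact (mul_eq_zero.1 hij).resolve_left hc0
  · exact hΦ.inner_eq_zero_of_row_or_col_or_symbol_eq hO
      (fun e => hql (Prod.ext_iff.1 e).2) (by tauto)

theorem IsQLS.card_le_card_add_one_of_inner_eq_zero (hΦ : IsQLS Φ)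
    {x : EuclideanSpace ℂ (Fin n)} (hx : ‖x‖ = 1) {σ : Fin n → Fin n}
    (hσ : Orthonormal ℂ fun q => Φ (σ q) q) (Q T : Finset (Fin n))
    (hzero : ∀ q ∈ Q, ∀ p ∉ T, p ≠ σ q → inner ℂ (Φ p q) x = 0) : Q.card ≤ T.card + 1 := by
  set f : Fin n → Fin n → ℝ := fun p q => ‖inner ℂ (Φ p q) x‖ ^ 2
  have hcard : Fintype.card (Fin n) = Module.finrank ℂ (EuclideanSpace ℂ (Fin n)) := by simp
  have hrow : ∀ p, ∑ q ∈ Q, f p q ≤ 1 := fun p => by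
    simpa [hx] using (hΦ.1 p).sum_inner_products_le x (s := Q)
  have htransversal : ∑ q ∈ Q, f (σ q) q ≤ 1 := by
    simpa [hx] using hσ.sum_inner_products_le x (s := Q)
  have hcol : ∀ q ∈ Q, 1 ≤ f (σ q) q + ∑ p ∈ T, f p q := fun q hq => by
    simpa [hx] using (hΦ.2 q).sq_norm_le_of_inner_eq_zero hcard (σ q) T (hzero q hq)
  have : (Q.card : ℝ) ≤ T.card + 1 := calc
    (Q.card : ℝ) = ∑ q ∈ Q, 1 := by simp
    _ ≤ ∑ q ∈ Q, (f (σ q) q + ∑ p ∈ T, f p q) := sum_le_sum hcol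
    _ = ∑ q ∈ Q, f (σ q) q + ∑ p ∈ T, ∑ q ∈ Q, f p q := by rw [sum_add_distrib, sum_comm]
    _ ≤ 1 + ∑ p ∈ T, 1 := add_le_add htransversal (sum_le_sum fun p _ => hrow p)
    _ = T.card + 1 := by simp [add_comm]
  exact_mod_cast this

end QuantumLatinSquare

/-- If a classical Latin square `A` of order 6 has a subsquare of order three with row
set `R`, column set `C` and symbol set `S`, and `Φ` is a quantum Latin square of order 6
orthogonal to the classical quantum Latin square determined by `A`, then the nine
entries of `Φ` in the block `R × C` are pairwise non-parallel. -/
theorem subsquare_entries_nonparallel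
    (A : Fin 6 → Fin 6 → Fin 6) (hA : IsLatin A)
    (R C S : Finset (Fin 6)) (hR : R.card = 3) (hC : C.card = 3) (hS : S.card = 3)
    (hsub : ∀ i ∈ R, ∀ j ∈ C, A i j ∈ S)
    (Ψ Φ : Fin 6 → Fin 6 → EuclideanSpace ℂ (Fin 6))
    (hΨdef : ∀ i j, Ψ i j = EuclideanSpace.single (A i j) (1 : ℂ))
    (hΦ : IsQLS Φ) (hO : OrthQLS Ψ Φ) :
    ∀ i ∈ R, ∀ j ∈ C, ∀ k ∈ R, ∀ l ∈ C, (i, j) ≠ (k, l) →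
      ∀ c : ℂ, Φ i j ≠ c • Φ k l := by
  intro i hi j hj k hk l hl hne c hc
  obtain rfl : Ψ = fun p q => EuclideanSpace.single (A p q) (1 : ℂ) :=
    funext fun p => funext (hΨdef p)
  have hc0 : c ≠ 0 := by rintro rfl; simpa [hc] using (hΦ.1 i).1 j
  obtain ⟨hik, hjl, hsym⟩ := hΦ.ne_of_eq_smul hO hc0 hne hc
  have hS' : S = {A i j, A i l, A k l} :=
    (eq_of_subset_of_card_le (by simp [insert_subset_iff, hsub, hi, hj, hk, hl]) (by
      rw [hS, card_eq_three.2 ⟨_, _, _, fun h => hjl ((hA.1 i).1 h), hsym,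
        fun h => hik ((hA.2 l).1 h), rfl⟩])).symm
  have hT : (R \ {i, k}).card = 1 := by
    rw [card_sdiff_of_subset (by simp [insert_subset_iff, hi, hk]), hR, card_pair hik]
  choose σ hσ using fun q => (hA.2 q).2 (A i l)
  have hzero : ∀ q ∈ univ \ C, ∀ p ∉ R \ {i, k}, p ≠ σ q → inner ℂ (Φ p q) (Φ k l) = 0 := by
    intro q hq p hpT hpσ
    have hqC : q ∉ C := (mem_sdiff.1 hq).2
    refine hΦ.inner_eq_zero_of_row_or_symbol_eq_of_eq_smul hO hc0 hc
      (ne_of_mem_of_not_mem hj hqC).symm (ne_of_mem_of_not_mem hl hqC).symm ?_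
    by_cases hpR : p ∈ R
    · have : p = i ∨ p = k := by simpa [hpR, or_iff_not_imp_left] using hpT
      tauto
    · have hsymb := hA.mem_of_notMem_of_notMem hsub (by omega) (by omega) hpR hqC
      simp only [hS', mem_insert, mem_singleton] at hsymb
      have : A p q ≠ A i l := fun h => hpσ ((hA.2 q).1 (h.trans (hσ q).symm))
      tauto
  have := hΦ.card_le_card_add_one_of_inner_eq_zero ((hΦ.1 k).1 l)
    (hΦ.orthonormal_of_symbol_eq hO hσ) _ _ hzero
  rw [card_sdiff_of_subset (subset_univ C), hC, hT, card_univ, Fintype.card_fin] at this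
  omega
end
end

section
/- There exists a pair of orthogonal quantum Latin squares Ψ, Φ of order 9 such that every entry of Ψ is a standard basis vector of ℂ^9 (Ψ is classical), while Φ is not classical: there do not exist a unitary transformation U of ℂ^9 and unit scalars λ_{ij} ∈ ℂ such that every λ_{ij}·U(Φ_{ij}) is a standard basis vector of ℂ^9. -/
noncomputable section

/-!
Index `ℂ^9` by `G = (ℤ/3)²` and let `Ψ_{ij} = e_{i+j}`. The second square is
`Φ_{ij} = R_{j₂} e_{i-j}`, where `R_0` rotates the plane spanned by `e_0` and `e_b`, `b = (1,0)`,
through the angle with cosine `3/5` and fixes the other basis vectors, while `R_1 = R_2 = 1`.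
Without the rotation `Φ` would be the classical square `e_{i-j}`, orthogonal to `Ψ` because
`(i,j) ↦ (i+j, i-j)` is a bijection of `G²`; with it, the orthonormality and orthogonality
conditions become a finite computation with the integer matrices `5 R_y`.
But `⟨Φ_{00,00}, Φ_{01,01}⟩ = ⟨R_0 e_0, e_0⟩ = 3/5`, whereas after a unitary and phases the
entries of a classical square have inner products of modulus `0` or `1`.
-/

open scoped ComplexConjugate InnerProductSpace

def IsClassical {α β ι : Type*} [Fintype ι] [DecidableEq ι]
    (Φ : α → β → EuclideanSpace ℂ ι) : Prop :=
  ∃ (U : EuclideanSpace ℂ ι ≃ₗᵢ[ℂ] EuclideanSpace ℂ ι) (lam : α → β → ℂ),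
    (∀ i j, ‖lam i j‖ = 1) ∧ (∀ i j, ∃ k, lam i j • U (Φ i j) = EuclideanSpace.single k (1 : ℂ))

theorem IsClassical.norm_inner_eq_zero_or_one {α β ι : Type*} [Fintype ι] [DecidableEq ι]
    {Φ : α → β → EuclideanSpace ℂ ι} (hΦ : IsClassical Φ) (i : α) (j : β) (k : α) (l : β) :
    ‖⟪Φ i j, Φ k l⟫_ℂ‖ = 0 ∨ ‖⟪Φ i j, Φ k l⟫_ℂ‖ = 1 := by
  obtain ⟨U, lam, hlam, hsingle⟩ := hΦ
  obtain ⟨p, hp⟩ := hsingle i j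
  obtain ⟨q, hq⟩ := hsingle k l
  have hinner : ⟪EuclideanSpace.single p (1 : ℂ), EuclideanSpace.single q 1⟫_ℂ =
      conj (lam i j) * lam k l * ⟪Φ i j, Φ k l⟫_ℂ := by
    rw [← hp, ← hq, inner_smul_left, inner_smul_right, U.inner_map_map, mul_assoc]
  have hnorm := congrArg norm hinner
  rw [orthonormal_iff_ite.mp EuclideanSpace.orthonormal_single, norm_mul, norm_mul,
    RCLike.norm_conj, hlam, hlam, one_mul, one_mul] at hnorm
  split_ifs at hnorm
  · exact Or.inr (by simpa using hnorm.symm)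
  · exact Or.inl (by simpa using hnorm.symm)

theorem isQLS_of_inner_eq_ite {n : ℕ} {Φ : Fin n → Fin n → EuclideanSpace ℂ (Fin n)}
    (h : ∀ i j k l, (i = k ∨ j = l) → ⟪Φ i j, Φ k l⟫_ℂ = if (i, j) = (k, l) then 1 else 0) :
    IsQLS Φ := by
  refine ⟨fun i => orthonormal_iff_ite.mpr fun j l => ?_,
    fun j => orthonormal_iff_ite.mpr fun i k => ?_⟩
  · simpa using h i j i l (Or.inl rfl)
  · simpa using h i j k j (Or.inr rfl)

namespace MOQLS9

abbrev G := ZMod 3 × ZMod 3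

def b : G := (1, 0)

/-- The integer matrix `5 R_y`, with rows `g` and columns `h`. -/
def rot (y : ZMod 3) (g h : G) : ℤ :=
  if y ≠ 0 then (if g = h then 5 else 0)
  else if h = 0 then (if g = 0 then 3 else if g = b then 4 else 0)
  else if h = b then (if g = 0 then -4 else if g = b then 3 else 0)
  else if g = h then 5 else 0

def gram (i j k l : G) : ℤ := ∑ g, rot j.2 g (i - j) * rot l.2 g (k - l)

set_option maxRecDepth 10000 in
theorem gram_self : ∀ i j, gram i j i j = 25 := by decide

set_option maxRecDepth 100000 in
theorem gram_eq_zero :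
    ∀ i j k l, (i = k ∨ j = l ∨ i + j = k + l) → (i, j) ≠ (k, l) → gram i j k l = 0 := by
  decide

theorem gram_zero_zero_zero_one : gram 0 0 (0, 1) (0, 1) = 15 := by decide

def index : Fin 9 ≃ G := (Fintype.equivFinOfCardEq (α := G) rfl).symm

def basisVec (g : G) : EuclideanSpace ℂ (Fin 9) := EuclideanSpace.single (index.symm g) 1

theorem orthonormal_basisVec : Orthonormal ℂ basisVec :=
  EuclideanSpace.orthonormal_single.comp index.symm index.symm.injective

def psi (i j : G) : EuclideanSpace ℂ (Fin 9) := basisVec (i + j)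

def phi (i j : G) : EuclideanSpace ℂ (Fin 9) := ∑ g, ((rot j.2 g (i - j) : ℂ) / 5) • basisVec g

theorem inner_psi (i j k l : G) : ⟪psi i j, psi k l⟫_ℂ = if i + j = k + l then 1 else 0 :=
  orthonormal_iff_ite.mp orthonormal_basisVec _ _

theorem inner_phi (i j k l : G) : ⟪phi i j, phi k l⟫_ℂ = gram i j k l / 25 := by
  rw [phi, phi, orthonormal_basisVec.inner_sum, gram, Int.cast_sum, Finset.sum_div]
  refine Finset.sum_congr rfl fun g _ => ?_
  simp only [map_div₀, map_intCast, map_ofNat]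
  push_cast
  ring

theorem inner_phi_eq_ite {i j k l : G} (h : i = k ∨ j = l ∨ i + j = k + l) :
    ⟪phi i j, phi k l⟫_ℂ = if (i, j) = (k, l) then 1 else 0 := by
  rw [inner_phi]
  split_ifs with hij
  · obtain ⟨rfl, rfl⟩ := Prod.mk.inj hij
    rw [gram_self]
    norm_num
  · rw [gram_eq_zero i j k l h hij]
    simp

theorem isQLS_psi : IsQLS fun i j => psi (index i) (index j) := by
  refine isQLS_of_inner_eq_ite fun i j k l hline => ?_
  rcases hline with rfl | rfl <;> simp [inner_psi]

theorem isQLS_phi : IsQLS fun i j => phi (index i) (index j) := by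
  refine isQLS_of_inner_eq_ite fun i j k l hline => ?_
  rw [inner_phi_eq_ite (hline.imp (congrArg index) (Or.inl ∘ congrArg index))]
  simp

theorem orthQLS_psi_phi :
    OrthQLS (fun i j => psi (index i) (index j)) (fun i j => phi (index i) (index j)) := by
  intro i j k l hne
  rw [inner_psi]
  split_ifs with hsum
  · rw [inner_phi_eq_ite (Or.inr (Or.inr hsum)), if_neg (by simpa using hne), mul_zero]
  · rw [zero_mul]

theorem not_isClassical_phi : ¬ IsClassical fun i j => phi (index i) (index j) := by
  intro hΦ
  have h := hΦ.norm_inner_eq_zero_or_one (index.symm 0) (index.symm 0) (index.symm (0, 1))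
    (index.symm (0, 1))
  simp only [Equiv.apply_symm_apply, inner_phi, gram_zero_zero_zero_one] at h
  norm_num at h

end MOQLS9

/-- There exist two orthogonal quantum Latin squares of order 9 such that one of them is
classical (all entries standard basis vectors) while the other is not classical: no
unitary of `ℂ^9` together with unit scalar factors turns all its entries into standard
basis vectors. -/
theorem exists_two_MOQLS_nine_one_classical_one_not :
    ∃ Ψ Φ : Fin 9 → Fin 9 → EuclideanSpace ℂ (Fin 9),
      IsQLS Ψ ∧ IsQLS Φ ∧ OrthQLS Ψ Φ ∧
      (∀ i j, ∃ k, Ψ i j = EuclideanSpace.single k (1 : ℂ)) ∧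
      ¬ ∃ (U : EuclideanSpace ℂ (Fin 9) ≃ₗᵢ[ℂ] EuclideanSpace ℂ (Fin 9))
          (lam : Fin 9 → Fin 9 → ℂ),
          (∀ i j, ‖lam i j‖ = 1) ∧
          (∀ i j, ∃ k, lam i j • U (Φ i j) = EuclideanSpace.single k (1 : ℂ)) := by
  open MOQLS9 in
  exact ⟨_, _, isQLS_psi, isQLS_phi, orthQLS_psi_phi, fun i j => ⟨_, rfl⟩, not_isClassical_phi⟩
end
end
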